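/- arXiv:0812.0372 — 6 statements merged into one kernel-verified Lean document; each statement's English description precedes it below -/
import Mathlib

section
/- Let G be a finite simple graph with maximum degree at most D that contains no clique on D+1 vertices, and let D = α_1 + α_2 + ... + α_k where each α_i ≥ 2 is an integer. Then V(G) can be partitioned into k sets V_1, V_2, …, V_k such that for every i ∈ {1,…,k} the induced subgraph G[V_i] contains no clique on α_i + 1 vertices and has maximum degree at most α_i. -/
open Finset
set_option linter.unusedSectionVars false

namespace LovPart

variable {V : Type*} [Fintype V] [DecidableEq V]
variable (G : SimpleGraph V) [DecidableRel G.Adj]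

/-- number of neighbors of `v` inside `S` -/
def dIn (S : Finset V) (v : V) : ℕ := (S ∩ G.neighborFinset v).card

/-- doubled edge count inside `S` -/
def esum (S : Finset V) : ℕ := ∑ v ∈ S, dIn G S v

/-- number of `q`-cliques inside `S` -/
def bad (q : ℕ) (S : Finset V) : ℕ := ((G.cliqueFinset q).filter (· ⊆ S)).card

def phi (qS qT : ℕ) (S T : Finset V) : ℕ := qT * esum G S + qS * esum G T

def cost (qS qT : ℕ) (S T : Finset V) : ℕ := bad G (qS+1) S + bad G (qT+1) T

/-- extremal partition of U -/
def Ext (U S T : Finset V) (qS qT : ℕ) : Prop :=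
  Disjoint S T ∧ S ∪ T = U ∧
  ∀ S' T' : Finset V, Disjoint S' T' → S' ∪ T' = U →
    phi G qS qT S T ≤ phi G qS qT S' T' ∧
    (phi G qS qT S' T' = phi G qS qT S T →
      cost G qS qT S T ≤ cost G qS qT S' T')

variable {G}

lemma ext_symm {U S T : Finset V} {qS qT : ℕ} (h : Ext G U S T qS qT) :
    Ext G U T S qT qS := by
  obtain ⟨h1, h2, h3⟩ := h
  refine ⟨h1.symm, by rw [union_comm]; exact h2, ?_⟩
  intro S' T' hd hu
  have := h3 T' S' hd.symm (by rw [union_comm]; exact hu)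
  unfold phi cost at *
  omega

lemma dIn_partition {U S T : Finset V} (hST : Disjoint S T) (hU : S ∪ T = U) (v : V) :
    dIn G S v + dIn G T v = dIn G U v := by
  unfold dIn
  rw [← hU, union_inter_distrib_right, card_union_of_disjoint
    (hST.mono inter_subset_left inter_subset_left)]

lemma not_mem_nbr (x : V) : x ∉ G.neighborFinset x := by
  simp [SimpleGraph.mem_neighborFinset]

lemma erase_inter_nbr (S : Finset V) (x : V) :
    (S.erase x) ∩ G.neighborFinset x = S ∩ G.neighborFinset x := by
  ext y
  simp only [mem_inter, mem_erase]
  constructor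
  · rintro ⟨⟨_, hy⟩, hn⟩; exact ⟨hy, hn⟩
  · rintro ⟨hy, hn⟩
    refine ⟨⟨?_, hy⟩, hn⟩
    rintro rfl; exact not_mem_nbr _ hn

lemma esum_erase {S : Finset V} {x : V} (hx : x ∈ S) :
    esum G (S.erase x) + 2 * dIn G S x = esum G S := by
  have key : ∀ v ∈ S.erase x,
      dIn G S v = dIn G (S.erase x) v + (if x ∈ G.neighborFinset v then 1 else 0) := by
    intro v hv
    unfold dIn
    by_cases hxy : x ∈ G.neighborFinset v
    · have hset : S ∩ G.neighborFinset v
          = insert x ((S.erase x) ∩ G.neighborFinset v) := by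
        ext y
        simp only [mem_inter, mem_insert, mem_erase]
        constructor
        · rintro ⟨hyS, hyN⟩
          by_cases hyx : y = x
          · exact Or.inl hyx
          · exact Or.inr ⟨⟨hyx, hyS⟩, hyN⟩
        · rintro (rfl | ⟨⟨_, hyS⟩, hyN⟩)
          · exact ⟨hx, hxy⟩
          · exact ⟨hyS, hyN⟩
      rw [hset, card_insert_of_notMem (by simp), if_pos hxy]
    · have hset : S ∩ G.neighborFinset v = (S.erase x) ∩ G.neighborFinset v := by
        ext y
        simp only [mem_inter, mem_erase]
        constructor
        · rintro ⟨hyS, hyN⟩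
          refine ⟨⟨?_, hyS⟩, hyN⟩
          rintro rfl; exact hxy hyN
        · rintro ⟨⟨_, hyS⟩, hyN⟩; exact ⟨hyS, hyN⟩
      rw [hset, if_neg hxy]
      omega
  have h1 : esum G S = dIn G S x + ∑ v ∈ S.erase x, dIn G S v := by
    unfold esum
    rw [Finset.add_sum_erase S (dIn G S) hx]
  have h2 : ∑ v ∈ S.erase x, dIn G S v
      = esum G (S.erase x) + ∑ v ∈ S.erase x, (if x ∈ G.neighborFinset v then 1 else 0) := by
    unfold esum
    rw [← Finset.sum_add_distrib]
    exact Finset.sum_congr rfl key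
  have h3 : ∑ v ∈ S.erase x, (if x ∈ G.neighborFinset v then 1 else 0)
      = dIn G (S.erase x) x := by
    rw [← Finset.card_filter]
    unfold dIn
    congr 1
    ext y
    simp only [mem_filter, mem_inter, SimpleGraph.mem_neighborFinset]
    rw [G.adj_comm]
  have h4 : dIn G (S.erase x) x = dIn G S x := by
    unfold dIn; rw [erase_inter_nbr]
  omega

lemma esum_insert {T : Finset V} {x : V} (hx : x ∉ T) :
    esum G (insert x T) = esum G T + 2 * dIn G T x := by
  have h := esum_erase (G := G) (S := insert x T) (x := x) (mem_insert_self x T)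
  rw [erase_insert hx] at h
  have h2 : dIn G (insert x T) x = dIn G T x := by
    unfold dIn
    rw [insert_inter_of_notMem (not_mem_nbr x)]
  omega

lemma move_partition {U S T : Finset V} {x : V} (hST : Disjoint S T) (hU : S ∪ T = U)
    (hx : x ∈ S) :
    Disjoint (S.erase x) (insert x T) ∧ (S.erase x) ∪ (insert x T) = U := by
  constructor
  · rw [disjoint_left]
    intro y hy hy2
    rw [mem_insert] at hy2
    rcases hy2 with rfl | hy2
    · exact (mem_erase.mp hy).1 rfl
    · exact (disjoint_left.mp hST) (mem_erase.mp hy).2 hy2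
  · rw [← hU]
    ext y
    simp only [mem_union, mem_erase, mem_insert]
    by_cases hyx : y = x
    · subst hyx; simp [hx]
    · simp [hyx]

lemma phi_move {S T : Finset V} {x : V} (hx : x ∈ S) (hxT : x ∉ T) (qS qT : ℕ) :
    phi G qS qT (S.erase x) (insert x T) + qT * (2 * dIn G S x)
      = phi G qS qT S T + qS * (2 * dIn G T x) := by
  have h1 := esum_erase (G := G) hx
  have h2 := esum_insert (G := G) hxT
  unfold phi
  rw [h2]
  have : qT * esum G (S.erase x) + qT * (2 * dIn G S x) = qT * esum G S := by
    rw [← Nat.mul_add, h1]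
  rw [Nat.mul_add qS]
  omega

lemma firstOrder {U S T : Finset V} {qS qT : ℕ} (hext : Ext G U S T qS qT)
    {x : V} (hx : x ∈ S) :
    qT * dIn G S x ≤ qS * dIn G T x := by
  obtain ⟨hST, hU, hmin⟩ := hext
  have hxT : x ∉ T := disjoint_left.mp hST hx
  obtain ⟨hd, hu⟩ := move_partition hST hU hx
  have h := (hmin _ _ hd hu).1
  have heq := phi_move (G := G) hx hxT qS qT
  have e1 : qT * (2 * dIn G S x) = 2 * (qT * dIn G S x) := by ring
  have e2 : qS * (2 * dIn G T x) = 2 * (qS * dIn G T x) := by ring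
  omega

lemma quota {U S T : Finset V} {qS qT : ℕ} (hext : Ext G U S T qS qT)
    (hq : 1 ≤ qS)
    (hdeg : ∀ v ∈ U, dIn G U v ≤ qS + qT)
    {x : V} (hx : x ∈ S) :
    dIn G S x ≤ qS := by
  have h1 := firstOrder hext hx
  have hxU : x ∈ U := by rw [← hext.2.1]; exact mem_union_left _ hx
  have h2 : dIn G S x + dIn G T x = dIn G U x := dIn_partition hext.1 hext.2.1 x
  have h3 := hdeg x hxU
  -- (qS+qT) * dIn S x ≤ qS * (dIn S x + dIn T x) ≤ qS * (qS + qT)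
  have h4 : (qS + qT) * dIn G S x ≤ qS * (qS + qT) := by
    calc (qS + qT) * dIn G S x = qS * dIn G S x + qT * dIn G S x := by ring
    _ ≤ qS * dIn G S x + qS * dIn G T x := by omega
    _ = qS * (dIn G S x + dIn G T x) := by ring
    _ ≤ qS * (qS + qT) := by
        apply Nat.mul_le_mul_left
        omega
  have h5 : (qS + qT) * dIn G S x ≤ (qS + qT) * qS := by
    calc (qS + qT) * dIn G S x ≤ qS * (qS + qT) := h4
    _ = (qS + qT) * qS := by ring
  exact Nat.le_of_mul_le_mul_left h5 (by omega)

lemma exists_ext (U : Finset V) (qS qT : ℕ) :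
    ∃ A, A ⊆ U ∧ Ext G U A (U \ A) qS qT := by
  classical
  set M : ℕ := 2 * 2 ^ (U.card) + 1 with hM
  have costlt : ∀ S' T' : Finset V, Disjoint S' T' → S' ∪ T' = U →
      cost G qS qT S' T' < M := by
    intro S' T' hd hu
    have hS' : S' ⊆ U := by rw [← hu]; exact subset_union_left
    have hT' : T' ⊆ U := by rw [← hu]; exact subset_union_right
    have b1 : ∀ (q : ℕ) (X : Finset V), X ⊆ U → bad G q X ≤ 2 ^ U.card := by
      intro q X hXU
      unfold bad
      calc ((G.cliqueFinset q).filter (· ⊆ X)).card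
          ≤ (X.powerset).card := by
            apply card_le_card
            intro s hs
            rw [mem_powerset]
            exact (mem_filter.mp hs).2
      _ = 2 ^ X.card := card_powerset X
      _ ≤ 2 ^ U.card := Nat.pow_le_pow_right (by omega) (card_le_card hXU)
    have := b1 (qS+1) S' hS'
    have := b1 (qT+1) T' hT'
    unfold cost
    omega
  obtain ⟨A, hA, hmin⟩ := Finset.exists_min_image U.powerset
    (fun A => M * phi G qS qT A (U \ A) + cost G qS qT A (U \ A)) ⟨∅, by simp⟩
  rw [mem_powerset] at hA
  refine ⟨A, hA, disjoint_sdiff, union_sdiff_of_subset hA, ?_⟩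
  intro S' T' hd hu
  have hS'U : S' ⊆ U := by rw [← hu]; exact subset_union_left
  have hT' : T' = U \ S' := by
    rw [← hu]
    rw [union_sdiff_left]
    exact (sdiff_eq_self_of_disjoint hd.symm).symm
  have hmin' := hmin S' (mem_powerset.mpr hS'U)
  rw [← hT'] at hmin'
  have hcA := costlt A (U \ A) disjoint_sdiff (union_sdiff_of_subset hA)
  have hcS := costlt S' T' hd hu
  constructor
  · by_contra hlt
    push_neg at hlt
    have : M * phi G qS qT S' T' + M ≤ M * phi G qS qT A (U \ A) := by
      calc M * phi G qS qT S' T' + M = M * (phi G qS qT S' T' + 1) := by ring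
      _ ≤ M * phi G qS qT A (U \ A) := Nat.mul_le_mul_left M (by omega)
    omega
  · intro heq
    rw [heq] at hmin'
    omega

lemma bad_split_erase (q : ℕ) (x : V) (S : Finset V) :
    bad G q S = ((G.cliqueFinset q).filter (fun s => s ⊆ S ∧ x ∈ s)).card
      + bad G q (S.erase x) := by
  classical
  unfold bad
  have h := Finset.card_filter_add_card_filter_not
    (s := (G.cliqueFinset q).filter (· ⊆ S)) (p := fun s => x ∈ s)
  rw [filter_filter, filter_filter] at h
  have h2 : ((G.cliqueFinset q).filter fun s => s ⊆ S ∧ ¬ (x ∈ s))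
      = (G.cliqueFinset q).filter (· ⊆ S.erase x) := by
    apply filter_congr
    intro s _
    simp only [Finset.subset_erase, eq_iff_iff]
  rw [h2] at h
  omega

lemma bad_split_insert (q : ℕ) {x : V} {T : Finset V} (hxT : x ∉ T) :
    bad G q (insert x T) = ((G.cliqueFinset q).filter (fun s => s ⊆ insert x T ∧ x ∈ s)).card
      + bad G q T := by
  have h := bad_split_erase (G := G) q x (insert x T)
  rw [erase_insert hxT] at h
  exact h

lemma containers_S {q : ℕ} {C S : Finset V} {x : V} (hC : C ⊆ S)
    (hclq : G.IsNClique (q+1) C) (hx : x ∈ C)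
    (hpin : S ∩ G.neighborFinset x = C.erase x) :
    (G.cliqueFinset (q+1)).filter (fun s => s ⊆ S ∧ x ∈ s) = {C} := by
  ext s
  simp only [mem_filter, mem_singleton, SimpleGraph.mem_cliqueFinset_iff]
  constructor
  · rintro ⟨hsclq, hsS, hxs⟩
    have h1 : s.erase x ⊆ C.erase x := by
      rw [← hpin]
      intro y hy
      obtain ⟨hyne, hys⟩ := mem_erase.mp hy
      refine mem_inter.mpr ⟨hsS hys, ?_⟩
      rw [SimpleGraph.mem_neighborFinset]
      exact hsclq.1 (mem_coe.mpr hxs) (mem_coe.mpr hys) (Ne.symm hyne)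
    have hc1 : (s.erase x).card = q := by rw [card_erase_of_mem hxs, hsclq.2]; omega
    have hc2 : (C.erase x).card = q := by rw [card_erase_of_mem hx, hclq.2]; omega
    have h2 : s.erase x = C.erase x := eq_of_subset_of_card_le h1 (by omega)
    calc s = insert x (s.erase x) := (insert_erase hxs).symm
    _ = insert x (C.erase x) := by rw [h2]
    _ = C := insert_erase hx
  · rintro rfl; exact ⟨hclq, hC, hx⟩

lemma containers_T {q : ℕ} {T : Finset V} {x : V}
    (hdT : (T ∩ G.neighborFinset x).card = q) :
    (G.cliqueFinset (q+1)).filter (fun s => s ⊆ insert x T ∧ x ∈ s)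
      ⊆ {insert x (T ∩ G.neighborFinset x)} := by
  intro s hs
  simp only [mem_filter, SimpleGraph.mem_cliqueFinset_iff] at hs
  obtain ⟨hsclq, hsS, hxs⟩ := hs
  have h1 : s.erase x ⊆ T ∩ G.neighborFinset x := by
    intro y hy
    obtain ⟨hyne, hys⟩ := mem_erase.mp hy
    have hyT : y ∈ T := by
      have h := hsS hys
      rw [mem_insert] at h
      rcases h with rfl | h
      · exact absurd rfl hyne
      · exact h
    refine mem_inter.mpr ⟨hyT, ?_⟩
    rw [SimpleGraph.mem_neighborFinset]
    exact hsclq.1 (mem_coe.mpr hxs) (mem_coe.mpr hys) (Ne.symm hyne)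
  have hc1 : (s.erase x).card = q := by rw [card_erase_of_mem hxs, hsclq.2]; omega
  have h2 : s.erase x = T ∩ G.neighborFinset x := eq_of_subset_of_card_le h1 (by omega)
  rw [mem_singleton]
  calc s = insert x (s.erase x) := (insert_erase hxs).symm
  _ = _ := by rw [h2]

lemma move_main {U S T : Finset V} {qS qT : ℕ} (hext : Ext G U S T qS qT)
    (hdeg : ∀ v ∈ U, dIn G U v ≤ qS + qT) (hq : 1 ≤ qS)
    {C : Finset V} (hC : C ⊆ S) (hclq : G.IsNClique (qS+1) C) {x : V} (hx : x ∈ C) :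
    S ∩ G.neighborFinset x = C.erase x ∧
    dIn G S x = qS ∧ dIn G T x = qT ∧
    Ext G U (S.erase x) (insert x T) qS qT ∧
    G.IsNClique (qT+1) (insert x (T ∩ G.neighborFinset x)) := by
  obtain ⟨hST, hU, hmin⟩ := hext
  have hxS : x ∈ S := hC hx
  have hxT : x ∉ T := disjoint_left.mp hST hxS
  have hxU : x ∈ U := by rw [← hU]; exact mem_union_left _ hxS
  -- pin on S side
  have sub1 : C.erase x ⊆ S ∩ G.neighborFinset x := by
    intro y hy
    obtain ⟨hyne, hyC⟩ := mem_erase.mp hy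
    refine mem_inter.mpr ⟨hC hyC, ?_⟩
    rw [SimpleGraph.mem_neighborFinset]
    exact hclq.1 (mem_coe.mpr hx) (mem_coe.mpr hyC) (Ne.symm hyne)
  have hcerase : (C.erase x).card = qS := by rw [card_erase_of_mem hx, hclq.2]; omega
  have hdSle : dIn G S x ≤ qS := quota ⟨hST, hU, hmin⟩ hq hdeg hxS
  have hdSge : qS ≤ dIn G S x := by
    rw [← hcerase]
    exact card_le_card sub1
  have hdS : dIn G S x = qS := le_antisymm hdSle hdSge
  have hpin : S ∩ G.neighborFinset x = C.erase x := by
    symm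
    apply eq_of_subset_of_card_le sub1
    unfold dIn at hdS
    omega
  -- T side degree
  have hfo := firstOrder ⟨hST, hU, hmin⟩ hxS
  rw [hdS] at hfo
  have hdTge : qT ≤ dIn G T x := by
    have : qS * qT ≤ qS * dIn G T x := by
      calc qS * qT = qT * qS := by ring
      _ ≤ qS * dIn G T x := hfo
    exact Nat.le_of_mul_le_mul_left this (by omega)
  have hsum : dIn G S x + dIn G T x = dIn G U x := dIn_partition hST hU x
  have hdT : dIn G T x = qT := by
    have := hdeg x hxU
    omega
  -- moved partition
  obtain ⟨hd', hu'⟩ := move_partition hST hU hxS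
  -- phi equal
  have hphi := phi_move (G := G) hxS hxT qS qT
  rw [hdS, hdT] at hphi
  have hphieq : phi G qS qT (S.erase x) (insert x T) = phi G qS qT S T := by
    have e : qT * (2 * qS) = qS * (2 * qT) := by ring
    omega
  -- bad counts
  have hbadS := bad_split_erase (G := G) (qS+1) x S
  rw [containers_S hC hclq hx hpin, card_singleton] at hbadS
  have hbadT := bad_split_insert (G := G) (qT+1) hxT
  have hcardT : (T ∩ G.neighborFinset x).card = qT := hdT
  have hsub2 := containers_T (G := G) (x := x) (T := T) hcardT
  have hfle : ((G.cliqueFinset (qT+1)).filter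
      (fun s => s ⊆ insert x T ∧ x ∈ s)).card ≤ 1 := by
    calc _ ≤ ({insert x (T ∩ G.neighborFinset x)} : Finset (Finset V)).card :=
      card_le_card hsub2
    _ = 1 := card_singleton _
  -- cost after the move is ≤ cost before
  have hcost_le : cost G qS qT (S.erase x) (insert x T) ≤ cost G qS qT S T := by
    unfold cost
    omega
  -- minimality forces the reverse
  have hmin' := hmin (S.erase x) (insert x T) hd' hu'
  have hcost_ge : cost G qS qT S T ≤ cost G qS qT (S.erase x) (insert x T) :=
    hmin'.2 hphieq
  have hcosteq : cost G qS qT (S.erase x) (insert x T) = cost G qS qT S T :=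
    le_antisymm hcost_le hcost_ge
  -- forced creation: candidate is a clique
  have hfone : ((G.cliqueFinset (qT+1)).filter
      (fun s => s ⊆ insert x T ∧ x ∈ s)).card = 1 := by
    unfold cost at hcosteq
    omega
  have hfeq : (G.cliqueFinset (qT+1)).filter (fun s => s ⊆ insert x T ∧ x ∈ s)
      = {insert x (T ∩ G.neighborFinset x)} := by
    apply eq_of_subset_of_card_le hsub2
    rw [card_singleton]
    omega
  have hcand : G.IsNClique (qT+1) (insert x (T ∩ G.neighborFinset x)) := by
    have : insert x (T ∩ G.neighborFinset x)
        ∈ (G.cliqueFinset (qT+1)).filter (fun s => s ⊆ insert x T ∧ x ∈ s) := by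
      rw [hfeq]; exact mem_singleton_self _
    exact SimpleGraph.mem_cliqueFinset_iff.mp (mem_filter.mp this).1
  -- new extremality
  have hext' : Ext G U (S.erase x) (insert x T) qS qT := by
    refine ⟨hd', hu', ?_⟩
    intro S'' T'' hd2 hu2
    have h2 := hmin S'' T'' hd2 hu2
    rw [hphieq, hcosteq]
    exact ⟨h2.1, h2.2⟩
  exact ⟨hpin, hdS, hdT, hext', hcand⟩

lemma dichotomy {U S T : Finset V} {qS qT : ℕ} (hq1 : 1 ≤ qS) (hq2 : 1 ≤ qT)
    (hdeg : ∀ v ∈ U, dIn G U v ≤ qS + qT)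
    (hfree : ∀ s, s ⊆ U → ¬ G.IsNClique (qS + qT + 1) s)
    (hext : Ext G U S T qS qT) {K : Finset V} (hK : K ⊆ S) (hKclq : G.IsNClique (qS+1) K)
    {u w x0 : V} (hu : u ∈ K) (hwT : w ∈ T) (hadjuw : G.Adj u w)
    (hx0 : x0 ∈ K) (hadjwx : G.Adj w x0) (hne : x0 ≠ u) : False := by
  have hdeg' : ∀ v ∈ U, dIn G U v ≤ qT + qS := by
    intro v hv; rw [Nat.add_comm]; exact hdeg v hv
  have hST : Disjoint S T := hext.1
  -- first move : u out of S
  obtain ⟨pin_u, dSu, dTu, ext1, C1clq⟩ := move_main hext hdeg hq1 hK hKclq hu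
  have ext1s := ext_symm ext1
  have hC1sub : insert u (T ∩ G.neighborFinset u) ⊆ insert u T :=
    insert_subset_insert _ inter_subset_left
  have hwC1 : w ∈ insert u (T ∩ G.neighborFinset u) := by
    apply mem_insert_of_mem
    exact mem_inter.mpr ⟨hwT, (SimpleGraph.mem_neighborFinset G u w).mpr hadjuw⟩
  -- second move : w into S-side
  obtain ⟨pin_w, dTw, dSw, ext2, Qclq⟩ := move_main ext1s hdeg' hq2 hC1sub C1clq hwC1
  -- pin of x0 at the original state
  obtain ⟨pin_x0, _, _, _, _⟩ := move_main hext hdeg hq1 hK hKclq hx0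
  -- the S-side neighborhood of w is K.erase u
  have claim : (S.erase u) ∩ G.neighborFinset w = K.erase u := by
    have hx0mem : x0 ∈ (S.erase u) ∩ G.neighborFinset w := by
      refine mem_inter.mpr ⟨mem_erase.mpr ⟨hne, hK hx0⟩, ?_⟩
      exact (SimpleGraph.mem_neighborFinset G w x0).mpr hadjwx
    have sub : (S.erase u) ∩ G.neighborFinset w ⊆ K.erase u := by
      intro y hy
      obtain ⟨hyS, hyN⟩ := mem_inter.mp hy
      by_cases hyx : y = x0
      · subst hyx; exact mem_erase.mpr ⟨hne, hx0⟩
      · have hyQ : y ∈ insert w ((S.erase u) ∩ G.neighborFinset w) :=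
          mem_insert_of_mem hy
        have hx0Q : x0 ∈ insert w ((S.erase u) ∩ G.neighborFinset w) :=
          mem_insert_of_mem hx0mem
        have hadjyx : G.Adj y x0 := Qclq.1 (mem_coe.mpr hyQ) (mem_coe.mpr hx0Q) hyx
        have : y ∈ S ∩ G.neighborFinset x0 := by
          refine mem_inter.mpr ⟨(mem_erase.mp hyS).2, ?_⟩
          exact (SimpleGraph.mem_neighborFinset G x0 y).mpr hadjyx.symm
        rw [pin_x0] at this
        exact mem_erase.mpr ⟨(mem_erase.mp hyS).1, (mem_erase.mp this).2⟩
    apply eq_of_subset_of_card_le sub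
    have c1 : (K.erase u).card = qS := by rw [card_erase_of_mem hu, hKclq.2]; omega
    have c2 : ((S.erase u) ∩ G.neighborFinset w).card = qS := dSw
    omega
  -- w is adjacent to all of K
  have hwadj : ∀ u' ∈ K, G.Adj u' w := by
    intro u' hu'
    by_cases h : u' = u
    · subst h; exact hadjuw
    · have : u' ∈ (S.erase u) ∩ G.neighborFinset w := by
        rw [claim]; exact mem_erase.mpr ⟨h, hu'⟩
      have := (mem_inter.mp this).2
      exact ((SimpleGraph.mem_neighborFinset G w u').mp this).symm
  -- common T-neighborhood
  have hWid : ∀ u' ∈ K, T ∩ G.neighborFinset u' = insert w (T ∩ G.neighborFinset w) := by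
    intro u' hu'
    obtain ⟨pin_u', dSu', dTu', ext1', C1clq'⟩ := move_main hext hdeg hq1 hK hKclq hu'
    have hC1sub' : insert u' (T ∩ G.neighborFinset u') ⊆ insert u' T :=
      insert_subset_insert _ inter_subset_left
    have hwC1' : w ∈ insert u' (T ∩ G.neighborFinset u') := by
      apply mem_insert_of_mem
      exact mem_inter.mpr ⟨hwT, (SimpleGraph.mem_neighborFinset G u' w).mpr (hwadj u' hu')⟩
    obtain ⟨pin_w', _, _, _, _⟩ := move_main (ext_symm ext1') hdeg' hq2 hC1sub' C1clq' hwC1'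
    -- pin_w' : (insert u' T) ∩ N w = (insert u' (T ∩ N u')).erase w
    have hu'T : u' ∉ T := disjoint_left.mp hST (hK hu')
    have hwu' : w ≠ u' := by
      rintro rfl; exact hu'T hwT
    have lhs : (insert u' T) ∩ G.neighborFinset w
        = insert u' (T ∩ G.neighborFinset w) := by
      apply insert_inter_of_mem
      exact (SimpleGraph.mem_neighborFinset G w u').mpr (hwadj u' hu').symm
    have rhs : (insert u' (T ∩ G.neighborFinset u')).erase w
        = insert u' ((T ∩ G.neighborFinset u').erase w) := by
      rw [erase_insert_of_ne hwu'.symm]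
    have key : insert u' (T ∩ G.neighborFinset w)
        = insert u' ((T ∩ G.neighborFinset u').erase w) := by
      rw [← lhs, ← rhs, pin_w']
    have e1 : T ∩ G.neighborFinset w = (T ∩ G.neighborFinset u').erase w := by
      have h1 : u' ∉ T ∩ G.neighborFinset w := fun h => hu'T (mem_inter.mp h).1
      have h2 : u' ∉ (T ∩ G.neighborFinset u').erase w :=
        fun h => hu'T (mem_inter.mp (mem_of_mem_erase h)).1
      have := congrArg (fun A => A.erase u') key
      simpa [erase_insert h1, erase_insert h2] using this
    have hwmem : w ∈ T ∩ G.neighborFinset u' :=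
      mem_inter.mpr ⟨hwT, (SimpleGraph.mem_neighborFinset G u' w).mpr (hwadj u' hu')⟩
    rw [e1, insert_erase hwmem]
  -- build the big clique
  set W : Finset V := insert w (T ∩ G.neighborFinset w) with hW
  have hWT : W ⊆ T := by
    rw [← hWid u hu]
    exact inter_subset_left
  have cardW : W.card = qT := by
    rw [← hWid u hu]
    exact dTu
  have hdisjKW : Disjoint K W := hST.mono hK hWT
  have hKfullsub : K ∪ W ⊆ U := by
    rw [← hext.2.1]
    exact union_subset (hK.trans subset_union_left) (hWT.trans subset_union_right)
  have hbig : G.IsNClique (qS + qT + 1) (K ∪ W) := by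
    constructor
    · intro a ha b hb hab
      rw [mem_coe, mem_union] at ha hb
      rcases ha with haK | haW
      · rcases hb with hbK | hbW
        · exact hKclq.1 (mem_coe.mpr haK) (mem_coe.mpr hbK) hab
        · have : b ∈ T ∩ G.neighborFinset a := by rw [hWid a haK]; exact hbW
          exact (SimpleGraph.mem_neighborFinset G a b).mp (mem_inter.mp this).2
      · rcases hb with hbK | hbW
        · have : a ∈ T ∩ G.neighborFinset b := by rw [hWid b hbK]; exact haW
          exact ((SimpleGraph.mem_neighborFinset G b a).mp (mem_inter.mp this).2).symm
        · have haC1 : a ∈ insert u (T ∩ G.neighborFinset u) := by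
            rw [← hWid u hu] at haW
            exact mem_insert_of_mem haW
          have hbC1 : b ∈ insert u (T ∩ G.neighborFinset u) := by
            rw [← hWid u hu] at hbW
            exact mem_insert_of_mem hbW
          exact C1clq.1 (mem_coe.mpr haC1) (mem_coe.mpr hbC1) hab
    · rw [card_union_of_disjoint hdisjKW, hKclq.2, cardW]
      omega
  exact hfree (K ∪ W) hKfullsub hbig

/-- Invariant of the Mozhan-type chase. `hist` records the previously visited bad
cliques together with the vertex moved out (`.2.1`) and the entry vertex (`.2.2`). -/
structure Inv (U : Finset V) (qS qT : ℕ) (S T K : Finset V) (m : V)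
    (hist : List (Finset V × V × V)) : Prop where
  ext : Ext G U S T qS qT
  KS : K ⊆ S
  Kclq : G.IsNClique (qS+1) K
  mK : m ∈ K
  hKU : ∀ h ∈ hist, h.1 ⊆ U
  hKclq : ∀ h ∈ hist, G.IsNClique (qS+1) h.1
  huK : ∀ h ∈ hist, h.2.1 ∈ h.1
  huT : ∀ h ∈ hist, h.2.1 ∈ T
  hKS : ∀ h ∈ hist, h.1.erase h.2.1 ⊆ S
  hmK : ∀ h ∈ hist, h.2.2 ∈ h.1
  hdisj : ∀ h ∈ hist, Disjoint h.1 K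
  hI5 : ∀ h ∈ hist, ∀ z ∈ h.1, ∀ y ∈ U, y ∉ h.1 → G.Adj z y →
          ∀ x ∈ h.1, G.Adj y x → x = z
  hI6 : ∀ h ∈ hist, ∀ z ∈ h.1, ∀ y ∈ S, G.Adj z y → y ∉ h.1 →
          (y = m ∨ ∃ h' ∈ hist, y = h'.2.2)

lemma chaseStep {U S T K : Finset V} {qS qT : ℕ} {m : V}
    {hist : List (Finset V × V × V)}
    (hq1 : 2 ≤ qS) (hq2 : 2 ≤ qT)
    (hdeg : ∀ v ∈ U, dIn G U v ≤ qS + qT)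
    (hfree : ∀ s, s ⊆ U → ¬ G.IsNClique (qS + qT + 1) s)
    (inv : Inv (G := G) U qS qT S T K m hist) :
    ∃ S' T' K' m' u, Inv (G := G) U qS qT S' T' K' m' ((K, u, m) :: hist) := by
  have hST : Disjoint S T := inv.ext.1
  have hSU : S ⊆ U := by rw [← inv.ext.2.1]; exact subset_union_left
  have hTU : T ⊆ U := by rw [← inv.ext.2.1]; exact subset_union_right
  have hdeg' : ∀ v ∈ U, dIn G U v ≤ qT + qS := by
    intro v hv; rw [Nat.add_comm]; exact hdeg v hv
  -- choose  u ∈ K, u ≠ m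
  have hKcard : K.card = qS + 1 := inv.Kclq.2
  have hemne : (K.erase m).Nonempty := by
    rw [← card_pos, card_erase_of_mem inv.mK]; omega
  obtain ⟨u, hu'⟩ := hemne
  have huK : u ∈ K := mem_of_mem_erase hu'
  have hum : u ≠ m := (mem_erase.mp hu').1
  have huS : u ∈ S := inv.KS huK
  have huT : u ∉ T := disjoint_left.mp hST huS
  -- purity or the dichotomy contradiction
  by_cases HP : ∀ z ∈ K, ∀ y ∈ T, G.Adj z y → ∀ x ∈ K, G.Adj y x → x = z
  swap
  · push_neg at HP
    obtain ⟨z, hz, y, hyT, hadj, x, hx, hadj2, hxz⟩ := HP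
    exact absurd (dichotomy (by omega) (by omega) hdeg hfree inv.ext inv.KS inv.Kclq
      hz hyT hadj hx hadj2 hxz) id
  -- move 1 : u from S to T
  obtain ⟨pin_u, dSu, dTu, ext1, C1clq⟩ :=
    move_main inv.ext hdeg (by omega) inv.KS inv.Kclq huK
  -- choose w
  have hTNu : (T ∩ G.neighborFinset u).Nonempty := by
    rw [← card_pos]
    have : (T ∩ G.neighborFinset u).card = dIn G T u := rfl
    rw [this, dTu]; omega
  obtain ⟨w, hw⟩ := hTNu
  have hwT : w ∈ T := (mem_inter.mp hw).1
  have hadjuw : G.Adj u w := (SimpleGraph.mem_neighborFinset G u w).mp (mem_inter.mp hw).2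
  have hwS : w ∉ S := disjoint_right.mp hST hwT
  have hwK : w ∉ K := fun h => hwS (inv.KS h)
  have hwu : w ≠ u := fun h => huT (h ▸ hwT)
  -- move 2 : w from T-side to S-side
  have hC1sub : insert u (T ∩ G.neighborFinset u) ⊆ insert u T :=
    insert_subset_insert _ inter_subset_left
  have hwC1 : w ∈ insert u (T ∩ G.neighborFinset u) := mem_insert_of_mem hw
  obtain ⟨pin_w, dTw, dSw, ext2, K'clq⟩ :=
    move_main (ext_symm ext1) hdeg' (by omega) hC1sub C1clq hwC1
  have ext2s := ext_symm ext2
  set S' : Finset V := insert w (S.erase u) with hS'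
  set T' : Finset V := (insert u T).erase w with hT'
  set K' : Finset V := insert w ((S.erase u) ∩ G.neighborFinset w) with hK'
  have hK'S' : K' ⊆ S' := insert_subset_insert _ (inter_subset_left.trans (by rfl))
  have hwK' : w ∈ K' := mem_insert_self _ _
  have huT' : u ∈ T' := mem_erase.mpr ⟨Ne.symm hwu, mem_insert_self _ _⟩
  -- w is not an old moved-out vertex
  have W1 : ∀ h ∈ hist, w ≠ h.2.1 := by
    intro h hh heq
    have hAdj : G.Adj h.2.1 u := by rw [← heq]; exact hadjuw.symm
    have huh1 : u ∉ h.1 := disjoint_right.mp (inv.hdisj h hh) huK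
    have := inv.hI6 h hh h.2.1 (inv.huK h hh) u huS hAdj huh1
    rcases this with h1 | ⟨h', hh', h2⟩
    · exact hum h1
    · have : u ∈ h'.1 := h2 ▸ inv.hmK h' hh'
      exact disjoint_right.mp (inv.hdisj h' hh') huK this
  have W2 : ∀ h ∈ hist, w ∉ h.1 := by
    intro h hh hcon
    by_cases hwu' : w = h.2.1
    · exact W1 h hh hwu'
    · exact hwS (inv.hKS h hh (mem_erase.mpr ⟨hwu', hcon⟩))
  -- pins of the vertices of K at the old state
  have pinz : ∀ z ∈ K, S ∩ G.neighborFinset z = K.erase z := by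
    intro z hz
    exact (move_main inv.ext hdeg (by omega) inv.KS inv.Kclq hz).1
  refine ⟨S', T', K', w, u, ?_⟩
  -- new-state pin (for freshness)
  have pinz' : ∀ z ∈ K', S' ∩ G.neighborFinset z = K'.erase z := by
    intro z hz
    exact (move_main ext2s hdeg (by omega) hK'S' K'clq hz).1
  refine {
    ext := ext2s
    KS := hK'S'
    Kclq := K'clq
    mK := hwK'
    hKU := ?_
    hKclq := ?_
    huK := ?_
    huT := ?_
    hKS := ?_
    hmK := ?_
    hdisj := ?_
    hI5 := ?_
    hI6 := ?_ }
  · intro h hh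
    rcases List.mem_cons.mp hh with rfl | hh
    · exact inv.KS.trans hSU
    · exact inv.hKU h hh
  · intro h hh
    rcases List.mem_cons.mp hh with rfl | hh
    · exact inv.Kclq
    · exact inv.hKclq h hh
  · intro h hh
    rcases List.mem_cons.mp hh with rfl | hh
    · exact huK
    · exact inv.huK h hh
  · intro h hh
    rcases List.mem_cons.mp hh with rfl | hh
    · exact huT'
    · exact mem_erase.mpr ⟨fun hc => (W1 h hh) hc.symm,
        mem_insert_of_mem (inv.huT h hh)⟩
  · intro h hh
    rcases List.mem_cons.mp hh with rfl | hh
    · intro y hy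
      obtain ⟨hyu, hyK⟩ := mem_erase.mp hy
      exact mem_insert_of_mem (mem_erase.mpr ⟨hyu, inv.KS hyK⟩)
    · intro y hy
      have hyS : y ∈ S := inv.hKS h hh hy
      have hyne : y ≠ u := fun hyu =>
        disjoint_left.mp (inv.hdisj h hh) (mem_of_mem_erase hy) (hyu.symm ▸ huK)
      exact mem_insert_of_mem (mem_erase.mpr ⟨hyne, hyS⟩)
  · intro h hh
    rcases List.mem_cons.mp hh with rfl | hh
    · exact inv.mK
    · exact inv.hmK h hh
  · -- freshness: all old cliques are disjoint from K'
    intro h hh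
    rcases List.mem_cons.mp hh with rfl | hh
    · -- Disjoint K K'
      rw [disjoint_right]
      intro z hzK' hzK
      rcases mem_insert.mp hzK' with heq | hz2
      · exact hwK (heq ▸ hzK)
      · obtain ⟨hzSu, hzN⟩ := mem_inter.mp hz2
        have hadjzw : G.Adj z w := ((SimpleGraph.mem_neighborFinset G w z).mp hzN).symm
        have := HP z hzK w hwT hadjzw u huK hadjuw.symm
        exact (mem_erase.mp hzSu).1 this.symm
    · -- Disjoint h.1 K' for old h
      rw [disjoint_right]
      intro z hzK' hzh1
      have hzne_w : z ≠ w := by rintro rfl; exact W2 h hh hzh1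
      have hzS' : z ∈ S' := hK'S' hzK'
      have hzne_us : z ≠ h.2.1 := by
        intro hzeq
        have hmt : h.2.1 ∈ T' := mem_erase.mpr ⟨fun hc => (W1 h hh) hc.symm,
          mem_insert_of_mem (inv.huT h hh)⟩
        exact disjoint_left.mp ext2s.1 hzS' (by rw [hzeq]; exact hmt)
      -- pick a second vertex z'' of h.1
      have hcard : 1 ≤ ((h.1.erase z).erase h.2.1).card := by
        have h1 : (h.1.erase z).card = qS := by
          rw [card_erase_of_mem hzh1, (inv.hKclq h hh).2]; omega
        have h2 : ((h.1.erase z).erase h.2.1).card + 1 ≥ (h.1.erase z).card := by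
          by_cases hm2 : h.2.1 ∈ h.1.erase z
          · rw [card_erase_of_mem hm2]; omega
          · rw [erase_eq_of_notMem hm2]; omega
        omega
      obtain ⟨z'', hz''⟩ := card_pos.mp (by omega : 0 < ((h.1.erase z).erase h.2.1).card)
      have hz''us : z'' ≠ h.2.1 := (mem_erase.mp hz'').1
      have hz''z : z'' ≠ z := (mem_erase.mp (mem_of_mem_erase hz'')).1
      have hz''h1 : z'' ∈ h.1 := mem_of_mem_erase (mem_of_mem_erase hz'')
      have hz''S : z'' ∈ S := inv.hKS h hh (mem_erase.mpr ⟨hz''us, hz''h1⟩)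
      have hz''u : z'' ≠ u := fun hzu =>
        disjoint_left.mp (inv.hdisj h hh) hz''h1 (hzu.symm ▸ huK)
      have hz''S' : z'' ∈ S' := mem_insert_of_mem (mem_erase.mpr ⟨hz''u, hz''S⟩)
      have hadjzz'' : G.Adj z z'' :=
        (inv.hKclq h hh).1 (mem_coe.mpr hzh1) (mem_coe.mpr hz''h1) (Ne.symm hz''z)
      have hz''K' : z'' ∈ K' := by
        have : z'' ∈ S' ∩ G.neighborFinset z := mem_inter.mpr
          ⟨hz''S', (SimpleGraph.mem_neighborFinset G z z'').mpr hadjzz''⟩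
        rw [pinz' z hzK'] at this
        exact mem_of_mem_erase this
      -- both z and z'' are neighbors of w, contradicting I5
      have hadjwz : G.Adj w z := by
        rcases mem_insert.mp hzK' with heq | hz2
        · exact absurd heq hzne_w
        · exact (SimpleGraph.mem_neighborFinset G w z).mp (mem_inter.mp hz2).2
      have hadjwz'' : G.Adj w z'' := by
        rcases mem_insert.mp hz''K' with heq | hz2
        · exact absurd (heq ▸ hz''h1) (W2 h hh)
        · exact (SimpleGraph.mem_neighborFinset G w z'').mp (mem_inter.mp hz2).2
      have := inv.hI5 h hh z hzh1 w (hTU hwT) (W2 h hh) hadjwz.symm z'' hz''h1 hadjwz''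
      exact hz''z this
  · -- I5
    intro h hh
    rcases List.mem_cons.mp hh with rfl | hh
    · intro z hz y hyU hyK hadj x hx hadj2
      have hyST : y ∈ S ∪ T := by rw [inv.ext.2.1]; exact hyU
      rcases mem_union.mp hyST with hyS | hyT
      · exfalso
        have : y ∈ S ∩ G.neighborFinset z := mem_inter.mpr
          ⟨hyS, (SimpleGraph.mem_neighborFinset G z y).mpr hadj⟩
        rw [pinz z hz] at this
        exact hyK (mem_of_mem_erase this)
      · exact HP z hz y hyT hadj x hx hadj2
    · exact inv.hI5 h hh
  · -- I6
    intro h hh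
    rcases List.mem_cons.mp hh with rfl | hh
    · intro z hz y hyS' hadj hyK
      rcases mem_insert.mp hyS' with rfl | hyS
      · exact Or.inl rfl
      · exfalso
        have : y ∈ S ∩ G.neighborFinset z := mem_inter.mpr
          ⟨(mem_erase.mp hyS).2, (SimpleGraph.mem_neighborFinset G z y).mpr hadj⟩
        rw [pinz z hz] at this
        exact hyK (mem_of_mem_erase this)
    · intro z hz y hyS' hadj hyh1
      rcases mem_insert.mp hyS' with rfl | hyS
      · exact Or.inl rfl
      · have := inv.hI6 h hh z hz y (mem_erase.mp hyS).2 hadj hyh1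
        rcases this with rfl | ⟨h', hh', h2⟩
        · exact Or.inr ⟨(K, u, y), List.mem_cons_self, rfl⟩
        · exact Or.inr ⟨h', List.mem_cons_of_mem _ hh', h2⟩

def histUnion : List (Finset V × V × V) → Finset V
  | [] => ∅
  | h :: t => h.1 ∪ histUnion t

lemma mem_histUnion {hist : List (Finset V × V × V)} {y : V} :
    y ∈ histUnion (V := V) hist ↔ ∃ h ∈ hist, y ∈ h.1 := by
  induction hist with
  | nil => simp [histUnion]
  | cons a t ih => simp [histUnion, ih]

lemma chaseAux {U : Finset V} {qS qT : ℕ}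
    (hq1 : 2 ≤ qS) (hq2 : 2 ≤ qT)
    (hdeg : ∀ v ∈ U, dIn G U v ≤ qS + qT)
    (hfree : ∀ s, s ⊆ U → ¬ G.IsNClique (qS + qT + 1) s) :
    ∀ (n : ℕ) (S T K : Finset V) (m : V) (hist : List (Finset V × V × V)),
      Inv (G := G) U qS qT S T K m hist →
      U.card < (K ∪ histUnion hist).card + n → False := by
  intro n
  induction n with
  | zero =>
    intro S T K m hist inv hlt
    have hsub : (K ∪ histUnion hist) ⊆ U := by
      apply union_subset
      · exact inv.KS.trans (by rw [← inv.ext.2.1]; exact subset_union_left)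
      · intro y hy
        obtain ⟨h, hh, hyh⟩ := mem_histUnion.mp hy
        exact inv.hKU h hh hyh
    have := card_le_card hsub
    omega
  | succ n ih =>
    intro S T K m hist inv hlt
    obtain ⟨S', T', K', m', u, inv'⟩ := chaseStep hq1 hq2 hdeg hfree inv
    apply ih S' T' K' m' ((K, u, m) :: hist) inv'
    have hdisjnew : Disjoint K' (K ∪ histUnion hist) := by
      rw [disjoint_union_right]
      constructor
      · exact (inv'.hdisj (K, u, m) (List.mem_cons_self)).symm
      · rw [disjoint_right]
        intro y hy hyK'
        obtain ⟨h, hh, hyh⟩ := mem_histUnion.mp hy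
        exact disjoint_left.mp (inv'.hdisj h (List.mem_cons_of_mem _ hh)) hyh hyK'
    have hunion : K' ∪ histUnion ((K, u, m) :: hist)
        = K' ∪ (K ∪ histUnion hist) := by
      simp [histUnion, union_assoc]
    rw [hunion, card_union_of_disjoint hdisjnew]
    have : 0 < K'.card := card_pos.mpr ⟨m', inv'.mK⟩
    omega

lemma noBad {U S T K : Finset V} {qS qT : ℕ}
    (hq1 : 2 ≤ qS) (hq2 : 2 ≤ qT)
    (hdeg : ∀ v ∈ U, dIn G U v ≤ qS + qT)
    (hfree : ∀ s, s ⊆ U → ¬ G.IsNClique (qS + qT + 1) s)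
    (hext : Ext G U S T qS qT) (hK : K ⊆ S) (hclq : G.IsNClique (qS+1) K) : False := by
  have hKne : K.Nonempty := card_pos.mp (by rw [hclq.2]; omega)
  obtain ⟨m, hm⟩ := hKne
  have inv0 : Inv (G := G) U qS qT S T K m [] := {
    ext := hext, KS := hK, Kclq := hclq, mK := hm,
    hKU := by simp, hKclq := by simp, huK := by simp, huT := by simp,
    hKS := by simp, hmK := by simp, hdisj := by simp, hI5 := by simp, hI6 := by simp }
  exact chaseAux hq1 hq2 hdeg hfree (U.card + 1) S T K m [] inv0 (by omega)

theorem two_part (U : Finset V) (a b : ℕ) (ha : 2 ≤ a) (hb : 2 ≤ b)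
    (hdeg : ∀ v ∈ U, dIn G U v ≤ a + b)
    (hfree : ∀ s, s ⊆ U → ¬ G.IsNClique (a + b + 1) s) :
    ∃ A, A ⊆ U ∧
      (∀ v ∈ A, dIn G A v ≤ a) ∧ (∀ s, s ⊆ A → ¬ G.IsNClique (a+1) s) ∧
      (∀ v ∈ U \ A, dIn G (U \ A) v ≤ b) ∧
      (∀ s, s ⊆ U \ A → ¬ G.IsNClique (b+1) s) := by
  obtain ⟨A, hAU, hext⟩ := exists_ext (G := G) U a b
  have hdeg2 : ∀ v ∈ U, dIn G U v ≤ b + a := by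
    intro v hv; rw [Nat.add_comm]; exact hdeg v hv
  have hfree2 : ∀ s, s ⊆ U → ¬ G.IsNClique (b + a + 1) s := by
    intro s hsU; rw [Nat.add_comm b a]; exact hfree s hsU
  refine ⟨A, hAU, ?_, ?_, ?_, ?_⟩
  · intro v hv; exact quota hext (by omega) hdeg hv
  · intro s hs hclq
    exact noBad (by omega) (by omega) hdeg hfree hext hs hclq
  · intro v hv; exact quota (ext_symm hext) (by omega) hdeg2 hv
  · intro s hs hclq
    exact noBad (by omega) (by omega) hdeg2 hfree2 (ext_symm hext) hs hclq

theorem main_part : ∀ (k : ℕ) (U : Finset V) (α : Fin k → ℕ), (∀ i, 2 ≤ α i) →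
    (∀ v ∈ U, dIn G U v ≤ ∑ i, α i) →
    (∀ s, s ⊆ U → ¬ G.IsNClique ((∑ i, α i) + 1) s) →
    ∃ P : Fin k → Finset V,
      (∀ i, P i ⊆ U) ∧ (∀ v ∈ U, ∃ i, v ∈ P i) ∧
      (∀ i j, i ≠ j → Disjoint (P i) (P j)) ∧
      (∀ i, ∀ v ∈ P i, dIn G (P i) v ≤ α i) ∧
      (∀ i, ∀ s, s ⊆ P i → ¬ G.IsNClique (α i + 1) s) := by
  intro k
  induction k with
  | zero =>
    intro U α hα hdeg hfree
    refine ⟨fun i => i.elim0, fun i => i.elim0, ?_, fun i => i.elim0,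
      fun i => i.elim0, fun i => i.elim0⟩
    intro v hv
    exfalso
    have hclq : G.IsNClique ((∑ i : Fin 0, α i) + 1) {v} := by
      have : (∑ i : Fin 0, α i) = 0 := rfl
      rw [this]
      constructor
      · rw [coe_singleton]; exact Set.pairwise_singleton _ _
      · exact card_singleton v
    exact hfree {v} (singleton_subset_iff.mpr hv) hclq
  | succ k ih =>
    intro U α hα hdeg hfree
    by_cases hk : k = 0
    · subst hk
      refine ⟨fun _ => U, fun _ => subset_rfl, fun v hv => ⟨0, hv⟩, ?_, ?_, ?_⟩
      · intro i j hij; exact absurd ((Fin.eq_zero i).trans (Fin.eq_zero j).symm) hij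
      · intro i v hv
        have hie : (∑ j, α j) = α i := by
          rw [Fin.sum_univ_one]
          congr 1
          exact (Fin.eq_zero i).symm
        rw [← hie]
        exact hdeg v hv
      · intro i s hs hclq
        have hie : (∑ j, α j) = α i := by
          rw [Fin.sum_univ_one]
          congr 1
          exact (Fin.eq_zero i).symm
        rw [← hie] at hclq
        exact hfree s hs hclq
    · set a := α 0 with haDef
      set b := ∑ i : Fin k, α i.succ with hbDef
      have hsum : (∑ i, α i) = a + b := Fin.sum_univ_succ α
      have hb : 2 ≤ b := by
        have hkpos : 0 < k := Nat.pos_of_ne_zero hk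
        have hj : (⟨0, hkpos⟩ : Fin k) ∈ (univ : Finset (Fin k)) := mem_univ _
        calc 2 ≤ α (Fin.succ ⟨0, hkpos⟩) := hα _
        _ ≤ b := Finset.single_le_sum (f := fun i : Fin k => α i.succ) (fun i _ => Nat.zero_le _) hj
      have hdeg1 : ∀ v ∈ U, dIn G U v ≤ a + b := by
        intro v hv; rw [← hsum]; exact hdeg v hv
      have hfree1 : ∀ s, s ⊆ U → ¬ G.IsNClique (a + b + 1) s := by
        intro s hsU; rw [← hsum]; exact hfree s hsU
      obtain ⟨A, hAU, hdA, hcA, hdB, hcB⟩ := two_part U a b (hα 0) hb hdeg1 hfree1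
      obtain ⟨P', hP1, hP2, hP3, hP4, hP5⟩ :=
        ih (U \ A) (fun i => α i.succ) (fun i => hα _) hdB hcB
      refine ⟨fun i => if h : i = 0 then A else P' (i.pred h), ?_, ?_, ?_, ?_, ?_⟩
      · intro i
        by_cases h : i = 0
        · simp only [h, dif_pos]; exact hAU
        · simp only [dif_neg h]; exact (hP1 _).trans (sdiff_subset)
      · intro v hv
        by_cases hvA : v ∈ A
        · exact ⟨0, by simp only [dif_pos]; exact hvA⟩
        · obtain ⟨i, hi⟩ := hP2 v (mem_sdiff.mpr ⟨hv, hvA⟩)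
          refine ⟨i.succ, ?_⟩
          have hne : i.succ ≠ 0 := Fin.succ_ne_zero i
          simp only [dif_neg hne, Fin.pred_succ]
          exact hi
      · intro i j hij
        by_cases hi : i = 0 <;> by_cases hj : j = 0
        · exact absurd (hi.trans hj.symm) hij
        · simp only [dif_pos hi, dif_neg hj]
          exact (sdiff_disjoint.symm).mono_right (hP1 _)
        · simp only [dif_pos hj, dif_neg hi]
          exact ((sdiff_disjoint.symm).mono_right (hP1 _)).symm
        · simp only [dif_neg hi, dif_neg hj]
          apply hP3
          intro hpe
          apply hij
          rw [← Fin.succ_pred i hi, ← Fin.succ_pred j hj, hpe]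
      · intro i v hv
        by_cases h : i = 0
        · subst h
          simp only [dif_pos] at hv ⊢
          exact hdA v hv
        · simp only [dif_neg h] at hv ⊢
          have : α i = α ((i.pred h).succ) := by rw [Fin.succ_pred]
          rw [this]
          exact hP4 _ v hv
      · intro i s hs hclq
        by_cases h : i = 0
        · subst h
          simp only [dif_pos] at hs
          exact hcA s hs hclq
        · simp only [dif_neg h] at hs
          have : α i = α ((i.pred h).succ) := by rw [Fin.succ_pred]
          rw [this] at hclq
          exact hP5 _ s hs hclq

end LovPart

/-- **corollary, à la Lovász.** Let `G` be a finite simple graph with maximum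
degree at most `D` and no clique on `D+1` vertices, and let `D = α_1 + ⋯ + α_k` with each
`α_i ≥ 2`. Then `V(G)` can be partitioned into `k` sets `V_1, …, V_k` such that for each `i`
the induced subgraph `G[V_i]` contains no clique on `α_i + 1` vertices and has maximum degree
at most `α_i`. -/
theorem lovasz_type_partition {V : Type*} [Fintype V] [DecidableEq V]
    (G : SimpleGraph V) [DecidableRel G.Adj] (D k : ℕ)
    (α : Fin k → ℕ) (hα : ∀ i, 2 ≤ α i) (hsum : ∑ i, α i = D)
    (hdeg : ∀ v : V, G.degree v ≤ D) (hfree : G.CliqueFree (D + 1)) :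
    ∃ f : V → Fin k, ∀ i : Fin k,
      (¬ ∃ s : Finset V, G.IsNClique (α i + 1) s ∧ ∀ v ∈ s, f v = i) ∧
      (∀ v : V, f v = i →
        ((G.neighborFinset v).filter fun u => f u = i).card ≤ α i) := by
  classical
  have hdeg' : ∀ v ∈ (Finset.univ : Finset V), LovPart.dIn G Finset.univ v ≤ ∑ i, α i := by
    intro v _
    rw [hsum]
    have hd : LovPart.dIn G Finset.univ v = G.degree v := by
      unfold LovPart.dIn
      rw [Finset.univ_inter]
      rfl
    rw [hd]
    exact hdeg v
  have hfree' : ∀ s, s ⊆ (Finset.univ : Finset V) →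
      ¬ G.IsNClique ((∑ i, α i) + 1) s := by
    intro s _ hs
    rw [hsum] at hs
    exact hfree s hs
  obtain ⟨P, hPU, hcov, hdisj, hdegP, hclqP⟩ :=
    LovPart.main_part (G := G) k Finset.univ α hα hdeg' hfree'
  choose f hf using fun v => hcov v (Finset.mem_univ v)
  refine ⟨f, fun i => ⟨?_, ?_⟩⟩
  · rintro ⟨s, hclq, hall⟩
    refine hclqP i s ?_ hclq
    intro v hv
    exact (hall v hv) ▸ hf v
  · intro v hfv
    have hsub : ((G.neighborFinset v).filter fun u => f u = i)
        ⊆ P i ∩ G.neighborFinset v := by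
      intro u hu
      rw [Finset.mem_filter] at hu
      exact Finset.mem_inter.mpr ⟨hu.2 ▸ hf u, hu.1⟩
    calc ((G.neighborFinset v).filter fun u => f u = i).card
        ≤ (P i ∩ G.neighborFinset v).card := Finset.card_le_card hsub
    _ = LovPart.dIn G (P i) v := rfl
    _ ≤ α i := hdegP i v (hfv ▸ hf v)
end

section
/- Let D ≥ 3, c ≥ 2 and p be integers with c ≤ p ≤ D. Suppose that every finite simple graph with maximum degree at most D, no clique on D+1 vertices, and minimum degree at least p admits a proper (c,p)-nondegenerate coloring with D colors. Then every finite simple graph with maximum degree at most D and no clique on D+1 vertices admits a proper (c,p)-nondegenerate coloring with D colors. -/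
open Finset

section Aux
variable {V : Type} [Fintype V] [DecidableEq V] (G : SimpleGraph V) [DecidableRel G.Adj] (p : ℕ)

/-- Auxiliary graph: `2p` copies of `G`, with copies of each vertex `v` of degree `< p`
joined by a `(p - deg v)`-regular bipartite circulant. -/
def mdrBigGraph : SimpleGraph (V × Fin p × Bool) where
  Adj a b := (a.2.2 = b.2.2 ∧ a.2.1 = b.2.1 ∧ G.Adj a.1 b.1) ∨
    (a.1 = b.1 ∧ ((a.2.2 = false ∧ b.2.2 = true ∧ ((b.2.1 - a.2.1 : Fin p) : ℕ) < p - G.degree a.1) ∨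
      (a.2.2 = true ∧ b.2.2 = false ∧ ((a.2.1 - b.2.1 : Fin p) : ℕ) < p - G.degree a.1)))
  symm := by
    constructor
    rintro ⟨v, i, ε⟩ ⟨w, j, δ⟩ h
    rcases h with ⟨h1, h2, h3⟩ | ⟨h1, ⟨h2, h3, h4⟩ | ⟨h2, h3, h4⟩⟩
    · exact Or.inl ⟨h1.symm, h2.symm, h3.symm⟩
    · cases h1; exact Or.inr ⟨rfl, Or.inr ⟨h3, h2, h4⟩⟩
    · cases h1; exact Or.inr ⟨rfl, Or.inl ⟨h3, h2, h4⟩⟩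
  loopless := by
    constructor
    rintro ⟨v, i, ε⟩ h
    rcases h with ⟨-, -, h⟩ | ⟨-, ⟨h1, h2, -⟩ | ⟨h1, h2, -⟩⟩
    · exact G.irrefl h
    · rw [h1] at h2; cases h2
    · rw [h1] at h2; cases h2

instance : DecidableRel (mdrBigGraph G p).Adj := fun a b => by
  unfold mdrBigGraph
  infer_instance

end Aux

section Aux2
variable {V : Type} [Fintype V] [DecidableEq V] (G : SimpleGraph V) [DecidableRel G.Adj] (p : ℕ)

lemma mdr_card_val_lt (d : ℕ) (hd : d ≤ p) :
    ((univ : Finset (Fin p)).filter (fun t : Fin p => (t : ℕ) < d)).card = d := by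
  rcases eq_or_lt_of_le hd with rfl | h
  · rw [filter_true_of_mem (fun t _ => t.isLt), card_univ, Fintype.card_fin]
  · have : (univ : Finset (Fin p)).filter (fun t : Fin p => (t : ℕ) < d) = Iio ⟨d, h⟩ := by
      ext t; simp [Fin.lt_def]
    rw [this, Fin.card_Iio]

lemma mdr_card_sub_lt (hp : 0 < p) (i : Fin p) (d : ℕ) (hd : d ≤ p) :
    ((univ : Finset (Fin p)).filter (fun j : Fin p => ((j - i : Fin p) : ℕ) < d)).card = d := by
  have : NeZero p := ⟨hp.ne'⟩
  have key : ((univ : Finset (Fin p)).filter (fun j : Fin p => ((j - i : Fin p) : ℕ) < d)).card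
      = ((univ : Finset (Fin p)).filter (fun t : Fin p => (t : ℕ) < d)).card := by
    apply Finset.card_bij' (fun j _ => j - i) (fun t _ => t + i)
    · intro j hj; simp only [mem_filter, mem_univ, true_and]
      exact (mem_filter.mp hj).2
    · intro t ht; simp only [mem_filter, mem_univ, true_and]
      simpa [add_sub_cancel_right] using (mem_filter.mp ht).2
    · intro j _; exact sub_add_cancel j i
    · intro t _; exact add_sub_cancel_right t i
  rw [key, mdr_card_val_lt p d hd]

lemma mdr_card_sub_lt' (hp : 0 < p) (i : Fin p) (d : ℕ) (hd : d ≤ p) :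
    ((univ : Finset (Fin p)).filter (fun j : Fin p => ((i - j : Fin p) : ℕ) < d)).card = d := by
  have : NeZero p := ⟨hp.ne'⟩
  have key : ((univ : Finset (Fin p)).filter (fun j : Fin p => ((i - j : Fin p) : ℕ) < d)).card
      = ((univ : Finset (Fin p)).filter (fun t : Fin p => (t : ℕ) < d)).card := by
    apply Finset.card_bij' (fun j _ => i - j) (fun t _ => i - t)
    · intro j hj; simp only [mem_filter, mem_univ, true_and]
      exact (mem_filter.mp hj).2
    · intro t ht; simp only [mem_filter, mem_univ, true_and]
      simpa [sub_sub_cancel] using (mem_filter.mp ht).2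
    · intro j _; exact sub_sub_cancel i j
    · intro t _; exact sub_sub_cancel i t
  rw [key, mdr_card_val_lt p d hd]

end Aux2

section Aux3
variable {V : Type} [Fintype V] [DecidableEq V] (G : SimpleGraph V) [DecidableRel G.Adj] (p : ℕ)

lemma mdr_adj (a b : V × Fin p × Bool) :
    (mdrBigGraph G p).Adj a b ↔
      ((a.2.2 = b.2.2 ∧ a.2.1 = b.2.1 ∧ G.Adj a.1 b.1) ∨
        (a.1 = b.1 ∧ ((a.2.2 = false ∧ b.2.2 = true ∧ ((b.2.1 - a.2.1 : Fin p) : ℕ) < p - G.degree a.1) ∨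
          (a.2.2 = true ∧ b.2.2 = false ∧ ((a.2.1 - b.2.1 : Fin p) : ℕ) < p - G.degree a.1)))) :=
  Iff.rfl

lemma mdr_nf_false (v : V) (i : Fin p) :
    (mdrBigGraph G p).neighborFinset (v, i, false) =
      ((G.neighborFinset v).image (fun w => (w, i, false))) ∪
      ((univ.filter (fun j : Fin p => ((j - i : Fin p) : ℕ) < p - G.degree v)).image
        (fun j => (v, j, true))) := by
  ext x
  simp only [SimpleGraph.mem_neighborFinset, mem_union, mem_image, mem_filter, mem_univ, true_and]
  rw [mdr_adj]
  constructor
  · rintro (⟨h1, h2, h3⟩ | ⟨h1, ⟨-, h3, h4⟩ | ⟨h2, -, -⟩⟩)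
    · exact Or.inl ⟨x.1, h3, by rw [show i = x.2.1 from h2, show false = x.2.2 from h1]⟩
    · exact Or.inr ⟨x.2.1, h4, by rw [show v = x.1 from h1, ← h3]⟩
    · exact (Bool.false_ne_true h2).elim
  · rintro (⟨u, hu, rfl⟩ | ⟨t, ht, rfl⟩)
    · exact Or.inl ⟨rfl, rfl, hu⟩
    · exact Or.inr ⟨rfl, Or.inl ⟨rfl, rfl, ht⟩⟩

lemma mdr_nf_true (v : V) (i : Fin p) :
    (mdrBigGraph G p).neighborFinset (v, i, true) =
      ((G.neighborFinset v).image (fun w => (w, i, true))) ∪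
      ((univ.filter (fun j : Fin p => ((i - j : Fin p) : ℕ) < p - G.degree v)).image
        (fun j => (v, j, false))) := by
  ext x
  simp only [SimpleGraph.mem_neighborFinset, mem_union, mem_image, mem_filter, mem_univ, true_and]
  rw [mdr_adj]
  constructor
  · rintro (⟨h1, h2, h3⟩ | ⟨h1, ⟨h2, -, -⟩ | ⟨-, h3, h4⟩⟩)
    · exact Or.inl ⟨x.1, h3, by rw [show i = x.2.1 from h2, show true = x.2.2 from h1]⟩
    · exact (Bool.false_ne_true (show (false : Bool) = true from h2.symm)).elim
    · exact Or.inr ⟨x.2.1, h4, by rw [show v = x.1 from h1, ← h3]⟩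
  · rintro (⟨u, hu, rfl⟩ | ⟨t, ht, rfl⟩)
    · exact Or.inl ⟨rfl, rfl, hu⟩
    · exact Or.inr ⟨rfl, Or.inr ⟨rfl, rfl, ht⟩⟩

lemma mdr_degree (hp : 0 < p) (v : V) (i : Fin p) (ε : Bool) :
    (mdrBigGraph G p).degree (v, i, ε) = max p (G.degree v) := by
  have hinj1 : ∀ ε' : Bool, Function.Injective (fun w : V => (w, i, ε')) := by
    intro ε' a b h; exact congrArg Prod.fst h
  have hinj2 : ∀ ε' : Bool, Function.Injective (fun j : Fin p => (v, j, ε')) := by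
    intro ε' a b h; exact congrArg (fun x : V × Fin p × Bool => x.2.1) h
  have hd : p - G.degree v ≤ p := Nat.sub_le _ _
  cases ε
  · rw [SimpleGraph.degree, mdr_nf_false, card_union_of_disjoint, card_image_of_injective _ (hinj1 false),
      card_image_of_injective _ (hinj2 true), mdr_card_sub_lt p hp i _ hd]
    · have hh : (G.neighborFinset v).card = G.degree v := rfl
      omega
    · rw [Finset.disjoint_left]
      rintro x hx hx'
      obtain ⟨w, -, rfl⟩ := mem_image.mp hx
      obtain ⟨t, -, he⟩ := mem_image.mp hx'
      exact Bool.false_ne_true (congrArg (fun x : V × Fin p × Bool => x.2.2) he).symm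
  · rw [SimpleGraph.degree, mdr_nf_true, card_union_of_disjoint, card_image_of_injective _ (hinj1 true),
      card_image_of_injective _ (hinj2 false), mdr_card_sub_lt' p hp i _ hd]
    · have hh : (G.neighborFinset v).card = G.degree v := rfl
      omega
    · rw [Finset.disjoint_left]
      rintro x hx hx'
      obtain ⟨w, -, rfl⟩ := mem_image.mp hx
      obtain ⟨t, -, he⟩ := mem_image.mp hx'
      exact Bool.false_ne_true (congrArg (fun x : V × Fin p × Bool => x.2.2) he)

lemma mdr_cliqueFree {D : ℕ} (hD : 2 ≤ D) (hfree : G.CliqueFree (D + 1)) :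
    (mdrBigGraph G p).CliqueFree (D + 1) := by
  intro s hs
  obtain ⟨hclique, hcard⟩ := hs
  by_cases hsame : ∀ a ∈ s, ∀ b ∈ s, a.1 = b.1
  · obtain ⟨a, ha, b, hb, hab, heq⟩ :=
      Finset.exists_ne_map_eq_of_card_lt_of_maps_to
        (show (univ : Finset Bool).card < s.card by simp [hcard]; omega)
        (fun (x : V × Fin p × Bool) _ => mem_univ x.2.2)
    have hadj := hclique ha hb hab
    rw [mdr_adj] at hadj
    rcases hadj with ⟨-, -, h⟩ | ⟨-, ⟨h2, h3, -⟩ | ⟨h2, h3, -⟩⟩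
    · exact G.irrefl (v := b.1) (by rw [hsame a ha b hb] at h; exact h)
    · rw [h2, h3] at heq; exact Bool.false_ne_true heq
    · rw [h2, h3] at heq; exact Bool.false_ne_true heq.symm
  · push_neg at hsame
    obtain ⟨a, ha, b, hb, hne⟩ := hsame
    have hab : a ≠ b := fun h => hne (by rw [h])
    have hadj := hclique ha hb hab
    rw [mdr_adj] at hadj
    have h2 : a.2.1 = b.2.1 ∧ a.2.2 = b.2.2 := by
      rcases hadj with ⟨x1, x2, -⟩ | ⟨h, -⟩
      · exact ⟨x2, x1⟩
      · exact (hne h).elim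
    have hall : ∀ x ∈ s, x.2.1 = a.2.1 ∧ x.2.2 = a.2.2 := by
      intro x hx
      by_cases hxa : x = a
      · rw [hxa]; exact ⟨rfl, rfl⟩
      by_cases hxb : x = b
      · rw [hxb]; exact ⟨h2.1.symm, h2.2.symm⟩
      have hadja := hclique hx ha hxa
      have hadjb := hclique hx hb hxb
      rw [mdr_adj] at hadja hadjb
      rcases hadja with ⟨y1, y2, -⟩ | ⟨hxa1, -⟩
      · exact ⟨y2, y1⟩
      · rcases hadjb with ⟨y1, y2, -⟩ | ⟨hxb1, -⟩
        · exact ⟨y2.trans h2.1.symm, y1.trans h2.2.symm⟩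
        · exact (hne (hxa1.symm.trans hxb1)).elim
    refine hfree (s.image Prod.fst) ⟨?_, ?_⟩
    · intro u hu w hw huw
      obtain ⟨x, hx, rfl⟩ := mem_image.mp hu
      obtain ⟨y, hy, rfl⟩ := mem_image.mp hw
      have hxy : x ≠ y := fun h => huw (by rw [h])
      have := hclique hx hy hxy
      rw [mdr_adj] at this
      rcases this with ⟨-, -, h⟩ | ⟨h, -⟩
      · exact h
      · exact (huw h).elim
    · rw [Finset.card_image_of_injOn, hcard]
      intro x hx y hy hxy
      have h1 := hall x hx
      have h2 := hall y hy
      exact Prod.ext hxy (Prod.ext (h1.1.trans h2.1.symm) (h1.2.trans h2.2.symm))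

end Aux3

/-- **Proposition 0, reduction to minimum degree ≥ p.** Let `D ≥ 3`, `c ≥ 2`
and `c ≤ p ≤ D`. If every finite simple graph with maximum degree at most `D`, no clique on
`D+1` vertices and minimum degree at least `p` admits a proper `(c,p)`-nondegenerate
`D`-coloring, then every finite simple graph with maximum degree at most `D` and no clique on
`D+1` vertices admits a proper `(c,p)`-nondegenerate `D`-coloring. -/
theorem min_degree_reduction {V : Type} [Fintype V] [DecidableEq V]
    (G : SimpleGraph V) [DecidableRel G.Adj]
    (D c p : ℕ) (hD : 3 ≤ D) (hc : 2 ≤ c) (hcp : c ≤ p) (hpD : p ≤ D)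
    (hyp : ∀ (W : Type) [Fintype W] [DecidableEq W]
        (H : SimpleGraph W) [DecidableRel H.Adj],
      (∀ w : W, H.degree w ≤ D) → H.CliqueFree (D + 1) → (∀ w : W, p ≤ H.degree w) →
      ∃ f : W → Fin D,
        (∀ u v : W, H.Adj u v → f u ≠ f v) ∧
        (∀ w : W, p ≤ H.degree w → c ≤ ((H.neighborFinset w).image f).card))
    (hdeg : ∀ v : V, G.degree v ≤ D) (hfree : G.CliqueFree (D + 1)) :
    ∃ f : V → Fin D,
      (∀ u v : V, G.Adj u v → f u ≠ f v) ∧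
      (∀ v : V, p ≤ G.degree v → c ≤ ((G.neighborFinset v).image f).card) := by
  have hp0 : 0 < p := by omega
  have hdegH : ∀ w : V × Fin p × Bool, (mdrBigGraph G p).degree w = max p (G.degree w.1) := by
    rintro ⟨v, i, ε⟩; exact mdr_degree G p hp0 v i ε
  obtain ⟨F, hF1, hF2⟩ := hyp (V × Fin p × Bool) (mdrBigGraph G p)
    (fun w => by rw [hdegH]; exact max_le hpD (hdeg w.1))
    (mdr_cliqueFree G p (by omega) hfree)
    (fun w => by rw [hdegH]; exact le_max_left _ _)
  refine ⟨fun v => F (v, ⟨0, hp0⟩, false), ?_, ?_⟩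
  · intro u v huv
    exact hF1 _ _ (by rw [mdr_adj]; exact Or.inl ⟨rfl, rfl, huv⟩)
  · intro v hv
    have hd0 : p - G.degree v = 0 := Nat.sub_eq_zero_of_le hv
    have hnf : (mdrBigGraph G p).neighborFinset (v, ⟨0, hp0⟩, false)
        = (G.neighborFinset v).image (fun w => (w, ⟨0, hp0⟩, false)) := by
      rw [mdr_nf_false, hd0]
      simp
    have hh := hF2 (v, ⟨0, hp0⟩, false) (by rw [hdegH]; exact le_max_left _ _)
    rw [hnf, Finset.image_image] at hh
    exact hh
end

section
/- Let G be a finite simple graph with maximum degree at most D that contains no clique on D+1 vertices, let D = α_1 + ... + α_{c+1} where each α_i ≥ 2 is an integer, and let ξ be a coloring of V(G) with colors {1,…,c+1} that minimizes Φ. Then for every color i ∈ {1,…,c+1} and every vertex v of color i, the number of neighbors of v having color i does not exceed α_i. -/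
open scoped Classical

/-- The number of edges of `G` both of whose endpoints have color `i` under `ξ`. -/
noncomputable def monoEdges {V : Type*} [Fintype V] [DecidableEq V] (G : SimpleGraph V)
    [DecidableRel G.Adj] {k : ℕ} (ξ : V → Fin k) (i : Fin k) : ℕ :=
  (G.edgeFinset.filter fun e => ∀ v ∈ e, ξ v = i).card

/-- `Φ(ξ) = Σ_i f_i(ξ)/α_i` as a rational number. -/
noncomputable def Phi {V : Type*} [Fintype V] [DecidableEq V] (G : SimpleGraph V)
    [DecidableRel G.Adj] {k : ℕ} (α : Fin k → ℕ) (ξ : V → Fin k) : ℚ :=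
  ∑ i, (monoEdges G ξ i : ℚ) / (α i : ℚ)

/-- weight of an edge -/
noncomputable def eW {V : Type*} {k : ℕ} (α : Fin k → ℕ) (χ : V → Fin k) (e : Sym2 V) : ℚ :=
  ∑ j, (if ∀ x ∈ e, χ x = j then (1 : ℚ) else 0) / (α j : ℚ)

lemma Phi_eq_sum_eW {V : Type*} [Fintype V] [DecidableEq V] (G : SimpleGraph V)
    [DecidableRel G.Adj] {k : ℕ} (α : Fin k → ℕ) (χ : V → Fin k) :
    Phi G α χ = ∑ e ∈ G.edgeFinset, eW α χ e := by
  unfold Phi eW monoEdges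
  rw [Finset.sum_comm]
  refine Finset.sum_congr rfl fun j _ => ?_
  rw [Finset.card_filter, ← Finset.sum_div, Nat.cast_sum]
  congr 1
  refine Finset.sum_congr rfl fun e _ => ?_
  split <;> simp

lemma eW_pair {V : Type*} {k : ℕ} (α : Fin k → ℕ) (hα : ∀ j, 2 ≤ α j) (χ : V → Fin k)
    (a b : V) : eW α χ s(a, b) = if χ a = χ b then (1 : ℚ) / (α (χ a) : ℚ) else 0 := by
  unfold eW
  by_cases h : χ a = χ b
  · rw [if_pos h]
    rw [Finset.sum_eq_single (χ a)]
    · simp [Sym2.mem_iff, ← h]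
    · intro j _ hj
      rw [if_neg, zero_div]
      simp only [Sym2.mem_iff]
      intro hcon
      exact hj ((hcon a (Or.inl rfl)).symm ▸ rfl)
    · simp
  · rw [if_neg h]
    refine Finset.sum_eq_zero fun j _ => ?_
    rw [if_neg, zero_div]
    simp only [Sym2.mem_iff]
    intro hcon
    exact h ((hcon a (Or.inl rfl)).trans (hcon b (Or.inr rfl)).symm)

/-- **Proposition 1.** If `ξ` minimizes `Φ`, then for every color `i` and every
vertex `v` of color `i`, the number of neighbors of `v` of color `i` does not exceed `α_i`. -/
theorem phi_minimizer_monochromatic_degree {V : Type*} [Fintype V] [DecidableEq V]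
    (G : SimpleGraph V) [DecidableRel G.Adj] (D c : ℕ)
    (α : Fin (c + 1) → ℕ) (hα : ∀ i, 2 ≤ α i) (hsum : ∑ i, α i = D)
    (hdeg : ∀ v : V, G.degree v ≤ D) (hfree : G.CliqueFree (D + 1))
    (ξ : V → Fin (c + 1)) (hmin : ∀ ψ : V → Fin (c + 1), Phi G α ξ ≤ Phi G α ψ)
    (i : Fin (c + 1)) (v : V) (hv : ξ v = i) :
    ((G.neighborFinset v).filter fun u => ξ u = i).card ≤ α i := by
  by_contra hcon
  push_neg at hcon
  set d : Fin (c + 1) → ℕ := fun j => ((G.neighborFinset v).filter fun u => ξ u = j).card with hd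
  have hdsum : ∑ j, d j = G.degree v := by
    rw [← SimpleGraph.card_neighborFinset_eq_degree]
    exact (Finset.card_eq_sum_card_fiberwise (f := ξ) (fun x _ => Finset.mem_univ _)).symm
  -- find a color j ≠ i with d j < α j
  have hdi : α i < d i := hcon
  have hex : ∃ j, j ≠ i ∧ d j < α j := by
    by_contra h
    push_neg at h
    have h1 : ∑ j ∈ Finset.univ.erase i, α j ≤ ∑ j ∈ Finset.univ.erase i, d j :=
      Finset.sum_le_sum fun j hj => h j (Finset.ne_of_mem_erase hj)
    have h2 : ∑ j ∈ Finset.univ.erase i, α j + α i = D := by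
      rw [← hsum, Finset.sum_erase_add _ _ (Finset.mem_univ i)]
    have h3 : ∑ j ∈ Finset.univ.erase i, d j + d i = G.degree v := by
      rw [← hdsum, Finset.sum_erase_add _ _ (Finset.mem_univ i)]
    have := hdeg v
    omega
  obtain ⟨j, hji, hdj⟩ := hex
  set ψ : V → Fin (c + 1) := Function.update ξ v j with hψ
  have hψv : ψ v = j := Function.update_self v j ξ
  have hψu : ∀ u ∈ G.neighborFinset v, ψ u = ξ u := by
    intro u hu
    have : u ≠ v := fun h => G.loopless.irrefl v (h ▸ (SimpleGraph.mem_neighborFinset G v u).mp hu).symm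
    exact Function.update_of_ne this j ξ
  -- compare Phi
  have hsplit : ∀ χ : V → Fin (c + 1),
      Phi G α χ = (∑ e ∈ G.edgeFinset.filter (fun e => v ∈ e), eW α χ e)
        + ∑ e ∈ G.edgeFinset.filter (fun e => ¬ v ∈ e), eW α χ e := by
    intro χ
    rw [Phi_eq_sum_eW, ← Finset.sum_filter_add_sum_filter_not G.edgeFinset (fun e => v ∈ e)]
  have himg : G.edgeFinset.filter (fun e => v ∈ e)
      = (G.neighborFinset v).image (fun u => s(v, u)) := by
    ext e
    simp only [Finset.mem_filter, Finset.mem_image, SimpleGraph.mem_neighborFinset,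
      SimpleGraph.mem_edgeFinset]
    constructor
    · rintro ⟨he, hve⟩
      induction e with
      | _ a b =>
        rcases Sym2.mem_iff.mp hve with h | h
        · exact ⟨b, h ▸ (SimpleGraph.mem_edgeSet G).mp he, by rw [h]⟩
        · refine ⟨a, ?_, by rw [h, Sym2.eq_swap]⟩
          subst h
          exact ((SimpleGraph.mem_edgeSet G).mp he).symm
    · rintro ⟨u, hu, rfl⟩
      exact ⟨(SimpleGraph.mem_edgeSet G).mpr hu, Sym2.mem_mk_left v u⟩
  have hinj : Set.InjOn (fun u => s(v, u)) (G.neighborFinset v) := by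
    intro a _ b _ hab
    exact (Sym2.congr_right).mp hab
  have hsum_nb : ∀ χ : V → Fin (c + 1),
      (∑ e ∈ G.edgeFinset.filter (fun e => v ∈ e), eW α χ e)
        = ∑ u ∈ G.neighborFinset v, eW α χ s(v, u) := by
    intro χ
    rw [himg, Finset.sum_image (fun a ha b hb h => hinj ha hb h)]
  -- the unchanged part
  have hrest : ∑ e ∈ G.edgeFinset.filter (fun e => ¬ v ∈ e), eW α ψ e
      = ∑ e ∈ G.edgeFinset.filter (fun e => ¬ v ∈ e), eW α ξ e := by
    refine Finset.sum_congr rfl fun e he => ?_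
    have hve : v ∉ e := (Finset.mem_filter.mp he).2
    have hxe : ∀ x ∈ e, ψ x = ξ x := by
      intro x hx
      apply Function.update_of_ne
      intro h
      exact hve (h ▸ hx)
    unfold eW
    refine Finset.sum_congr rfl fun k _ => ?_
    have hiff : (∀ x ∈ e, ψ x = k) = (∀ x ∈ e, ξ x = k) := by
      apply propext
      constructor <;> intro h x hx
      · rw [← hxe x hx]; exact h x hx
      · rw [hxe x hx]; exact h x hx
    rw [hiff]
  -- evaluate the incident sums
  have key : ∀ (χ : V → Fin (c + 1)) (k : Fin (c + 1)), χ v = k →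
      (∀ u ∈ G.neighborFinset v, χ u = ξ u) →
      ∑ u ∈ G.neighborFinset v, eW α χ s(v, u) = (d k : ℚ) / (α k : ℚ) := by
    intro χ k hk hagree
    have hterm : ∀ u ∈ G.neighborFinset v,
        eW α χ s(v, u) = if ξ u = k then (1 : ℚ) / (α k : ℚ) else 0 := by
      intro u hu
      rw [eW_pair α hα χ v u, hk, hagree u hu]
      by_cases h : ξ u = k
      · rw [if_pos h.symm, if_pos h]
      · rw [if_neg (fun hh => h hh.symm), if_neg h]
    rw [Finset.sum_congr rfl hterm, Finset.sum_ite, Finset.sum_const, Finset.sum_const_zero,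
      add_zero, nsmul_eq_mul, mul_one_div, hd]
  have hξsum := key ξ i hv (fun _ _ => rfl)
  have hψsum := key ψ j hψv hψu
  -- strict decrease
  have hαi : (0 : ℚ) < (α i : ℚ) := by exact_mod_cast Nat.lt_of_lt_of_le Nat.zero_lt_two (hα i)
  have hαj : (0 : ℚ) < (α j : ℚ) := by exact_mod_cast Nat.lt_of_lt_of_le Nat.zero_lt_two (hα j)
  have h1 : (d j : ℚ) / (α j : ℚ) < 1 := by
    rw [div_lt_one hαj]; exact_mod_cast hdj
  have h2 : (1 : ℚ) < (d i : ℚ) / (α i : ℚ) := by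
    rw [one_lt_div hαi]; exact_mod_cast hcon
  have hlt : Phi G α ψ < Phi G α ξ := by
    rw [hsplit ψ, hsplit ξ, hrest, hsum_nb ψ, hsum_nb ξ, hξsum, hψsum]
    linarith
  exact absurd (hmin ψ) (not_le.mpr hlt)
end

section
/- Let G be a finite simple graph with maximum degree at most D that contains no clique on D+1 vertices, let D = α_1 + ... + α_{c+1} where each α_i ≥ 2 is an integer, and let ξ be a coloring of V(G) with colors {1,…,c+1} that minimizes Φ. If a vertex v of color i is adjacent to exactly α_i vertices of color i, then for every color j ∈ {1,…,c+1} the vertex v is adjacent to exactly α_j vertices of color j. -/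
open scoped Classical

lemma mono_split {V : Type*} [Fintype V] [DecidableEq V] (G : SimpleGraph V)
    [DecidableRel G.Adj] {c : ℕ} (ξ : V → Fin c) (v : V)
    (ζ : V → Fin c) (hζ : ∀ w, w ≠ v → ζ w = ξ w) (k : Fin c) :
    monoEdges G ζ k
      = (G.edgeFinset.filter fun e => v ∉ e ∧ ∀ w ∈ e, ξ w = k).card
        + if ζ v = k then ((G.neighborFinset v).filter fun u => ξ u = k).card else 0 := by
  classical
  rw [monoEdges,
    ← Finset.card_filter_add_card_filter_not (s := G.edgeFinset.filter fun e => ∀ w ∈ e, ζ w = k) (p := fun e => v ∈ e)]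
  rw [add_comm]
  congr 1
  · rw [Finset.filter_filter]
    congr 1
    ext e
    simp only [Finset.mem_filter]
    constructor
    · rintro ⟨he, h1, h2⟩
      exact ⟨he, h2, fun w hw => by rw [← hζ w (fun h => h2 (h ▸ hw)), h1 w hw]⟩
    · rintro ⟨he, h2, h1⟩
      exact ⟨he, fun w hw => by rw [hζ w (fun h => h2 (h ▸ hw)), h1 w hw], h2⟩
  · rw [Finset.filter_filter]
    by_cases hvk : ζ v = k
    · simp only [hvk, if_true]
      have himg : G.edgeFinset.filter (fun e => (∀ w ∈ e, ζ w = k) ∧ v ∈ e)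
          = ((G.neighborFinset v).filter fun u => ξ u = k).image (fun u => s(v, u)) := by
        ext e
        simp only [Finset.mem_filter, Finset.mem_image, SimpleGraph.mem_edgeFinset,
          SimpleGraph.mem_neighborFinset]
        constructor
        · rintro ⟨he, hmono, hve⟩
          obtain ⟨u, rfl⟩ := Sym2.mem_iff_exists.mp hve
          have hadj : G.Adj v u := he
          refine ⟨u, ⟨hadj, ?_⟩, rfl⟩
          rw [← hζ u (G.ne_of_adj hadj).symm]
          exact hmono u (Sym2.mem_mk_right v u)
        · rintro ⟨u, ⟨hadj, hu⟩, rfl⟩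
          refine ⟨hadj, ?_, Sym2.mem_mk_left v u⟩
          intro w hw
          rcases Sym2.mem_iff.mp hw with rfl | rfl
          · exact hvk
          · rw [hζ w (G.ne_of_adj hadj).symm]; exact hu
      rw [himg, Finset.card_image_of_injective]
      intro a b hab
      exact (Sym2.congr_right).mp hab
    · simp only [hvk, if_false]
      rw [Finset.card_eq_zero, Finset.filter_eq_empty_iff]
      intro e he
      rintro ⟨hmono, hve⟩
      exact hvk (hmono v hve)

lemma phi_split {V : Type*} [Fintype V] [DecidableEq V] (G : SimpleGraph V)
    [DecidableRel G.Adj] {c : ℕ} (α : Fin c → ℕ) (ξ : V → Fin c) (v : V)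
    (ζ : V → Fin c) (hζ : ∀ w, w ≠ v → ζ w = ξ w) :
    Phi G α ζ
      = (∑ k, ((G.edgeFinset.filter fun e => v ∉ e ∧ ∀ w ∈ e, ξ w = k).card : ℚ) / α k)
        + (((G.neighborFinset v).filter fun u => ξ u = ζ v).card : ℚ) / α (ζ v) := by
  classical
  rw [Phi]
  have : ∀ k, (monoEdges G ζ k : ℚ) / α k
      = ((G.edgeFinset.filter fun e => v ∉ e ∧ ∀ w ∈ e, ξ w = k).card : ℚ) / α k
        + if ζ v = k then (((G.neighborFinset v).filter fun u => ξ u = k).card : ℚ) / α k else 0 := by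
    intro k
    rw [mono_split G ξ v ζ hζ k]
    push_cast
    rw [add_div]
    congr 1
    split_ifs <;> simp
  simp only [this]
  rw [Finset.sum_add_distrib, Finset.sum_ite_eq]
  simp

/-- **Proposition 2.** If `ξ` minimizes `Φ` and a vertex `v` of color `i` is
adjacent to exactly `α_i` vertices of color `i`, then for every color `j` the vertex `v` is
adjacent to exactly `α_j` vertices of color `j`. -/
theorem phi_minimizer_saturated_vertex {V : Type*} [Fintype V] [DecidableEq V]
    (G : SimpleGraph V) [DecidableRel G.Adj] (D c : ℕ)
    (α : Fin (c + 1) → ℕ) (hα : ∀ i, 2 ≤ α i) (hsum : ∑ i, α i = D)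
    (hdeg : ∀ v : V, G.degree v ≤ D) (hfree : G.CliqueFree (D + 1))
    (ξ : V → Fin (c + 1)) (hmin : ∀ ψ : V → Fin (c + 1), Phi G α ξ ≤ Phi G α ψ)
    (i : Fin (c + 1)) (v : V) (hv : ξ v = i)
    (hsat : ((G.neighborFinset v).filter fun u => ξ u = i).card = α i) :
    ∀ j : Fin (c + 1),
      ((G.neighborFinset v).filter fun u => ξ u = j).card = α j := by
  classical
  set d : Fin (c + 1) → ℕ := fun j => ((G.neighborFinset v).filter fun u => ξ u = j).card with hd
  have hαpos : ∀ j, (0 : ℚ) < α j := fun j => by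
    have := hα j; positivity
  -- Step 1: α j ≤ d j for all j
  have hge : ∀ j, α j ≤ d j := by
    intro j
    set ψ : V → Fin (c + 1) := Function.update ξ v j with hψ
    have hζ : ∀ w, w ≠ v → ψ w = ξ w := fun w hw => Function.update_of_ne hw _ _
    have hψv : ψ v = j := Function.update_self v j ξ
    have h1 := phi_split G α ξ v ξ (fun w _ => rfl)
    have h2 := phi_split G α ξ v ψ hζ
    have hle := hmin ψ
    rw [h1, h2, hψv, hv] at hle
    have hdiv : (d i : ℚ) / α i ≤ (d j : ℚ) / α j := by linarith
    rw [hd] at hdiv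
    simp only [hsat] at hdiv
    have h1' : (1 : ℚ) ≤ (d j : ℚ) / α j := by
      rw [div_self (ne_of_gt (hαpos i))] at hdiv
      exact hdiv
    have := (one_le_div (hαpos j)).mp h1'
    exact_mod_cast this
  -- Step 2: ∑ d = degree v
  have hdsum : ∑ j, d j = G.degree v := by
    rw [← SimpleGraph.card_neighborFinset_eq_degree]
    exact (Finset.card_eq_sum_card_fiberwise (fun u _ => Finset.mem_univ (ξ u))).symm
  -- Step 3: equal sums force equality
  have hsums : ∑ j, α j = ∑ j, d j := by
    have h1 : ∑ j, d j ≤ D := hdsum ▸ hdeg v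
    have h2 : ∑ j, α j ≤ ∑ j, d j := Finset.sum_le_sum fun j _ => hge j
    omega
  intro j
  exact ((Finset.sum_eq_sum_iff_of_le (fun j _ => hge j)).mp hsums j (Finset.mem_univ j)).symm
end

section
/- Let G be a finite simple graph with maximum degree at most D that contains no clique on D+1 vertices, let D = α_1 + ... + α_{c+1} where each α_i ≥ 2 is an integer, and let ξ be a coloring of V(G) with colors {1,…,c+1} that minimizes Φ. If a vertex v of color i is adjacent to at least one vertex of color i, then for every color j ∈ {1,…,c+1} the vertex v is adjacent to at least one vertex of color j. -/
open scoped Classical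

/-- **Proposition 3.** If `ξ` minimizes `Φ` and a vertex `v` of color `i` is
adjacent to at least one vertex of color `i`, then `v` is adjacent to at least one vertex of
every color `j`. -/
theorem phi_minimizer_all_colors_in_neighborhood {V : Type*} [Fintype V] [DecidableEq V]
    (G : SimpleGraph V) [DecidableRel G.Adj] (D c : ℕ)
    (α : Fin (c + 1) → ℕ) (hα : ∀ i, 2 ≤ α i) (hsum : ∑ i, α i = D)
    (hdeg : ∀ v : V, G.degree v ≤ D) (hfree : G.CliqueFree (D + 1))
    (ξ : V → Fin (c + 1)) (hmin : ∀ ψ : V → Fin (c + 1), Phi G α ξ ≤ Phi G α ψ)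
    (i : Fin (c + 1)) (v : V) (hv : ξ v = i)
    (hmono : ∃ u ∈ G.neighborFinset v, ξ u = i) :
    ∀ j : Fin (c + 1), ∃ u ∈ G.neighborFinset v, ξ u = j := by
  intro j
  by_contra hj
  push_neg at hj
  obtain ⟨u0, hu0, hu0i⟩ := hmono
  have hji : j ≠ i := by rintro rfl; exact hj u0 hu0 hu0i
  set ψ : V → Fin (c + 1) := Function.update ξ v j with hψdef
  have hψv : ψ v = j := by simp [hψdef]
  have hψw : ∀ w, w ≠ v → ψ w = ξ w := fun w hw => Function.update_of_ne hw _ _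
  -- for k ≠ i, the mono edge counts agree
  have keyset : ∀ k, k ≠ i →
      (G.edgeFinset.filter fun e => ∀ w ∈ e, ψ w = k) =
      (G.edgeFinset.filter fun e => ∀ w ∈ e, ξ w = k) := by
    intro k hk
    have hbneq : ∀ b', G.Adj v b' →
        (¬(ψ v = k ∧ ψ b' = k)) ∧ ¬(ξ v = k ∧ ξ b' = k) := by
      intro b' hadj'
      have hb'v : b' ≠ v := fun h => G.loopless.irrefl v (h ▸ hadj')
      constructor
      · rintro ⟨h1, h2⟩
        rw [hψv] at h1
        rw [hψw b' hb'v] at h2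
        exact hj b' (by rwa [SimpleGraph.mem_neighborFinset]) (h2.trans h1.symm)
      · rintro ⟨h1, _⟩
        exact hk (h1.symm.trans hv)
    apply Finset.filter_congr
    intro e he
    rw [SimpleGraph.mem_edgeFinset] at he
    induction e using Sym2.ind with
    | _ a b =>
      have hadj : G.Adj a b := he
      simp only [Sym2.mem_iff, forall_eq_or_imp, forall_eq]
      rcases eq_or_ne a v with hav | hav
      · obtain ⟨hL, hR⟩ := hbneq b (hav ▸ hadj)
        rw [hav]
        exact iff_of_false hL hR
      · rcases eq_or_ne b v with hbv | hbv
        · obtain ⟨hL, hR⟩ := hbneq a (hbv ▸ hadj.symm)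
          rw [hbv]
          exact iff_of_false (fun h => hL ⟨h.2, h.1⟩) (fun h => hR ⟨h.2, h.1⟩)
        · rw [hψw a hav, hψw b hbv]
  have keyeq : ∀ k, k ≠ i → monoEdges G ψ k = monoEdges G ξ k := by
    intro k hk; unfold monoEdges; rw [keyset k hk]
  -- for k = i, the count strictly decreases
  have keylt : monoEdges G ψ i < monoEdges G ξ i := by
    unfold monoEdges
    apply Finset.card_lt_card
    constructor
    · intro e
      simp only [Finset.mem_filter]
      rintro ⟨he, hcol⟩
      refine ⟨he, ?_⟩
      rw [SimpleGraph.mem_edgeFinset] at he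
      induction e using Sym2.ind with
      | _ a b =>
        have hadj : G.Adj a b := he
        simp only [Sym2.mem_iff, forall_eq_or_imp, forall_eq] at hcol ⊢
        obtain ⟨ha, hb⟩ := hcol
        have hav : a ≠ v := by rintro rfl; rw [hψv] at ha; exact hji ha
        have hbv : b ≠ v := by rintro rfl; rw [hψv] at hb; exact hji hb
        exact ⟨(hψw a hav).symm.trans ha, (hψw b hbv).symm.trans hb⟩
    · intro hsub
      have hadj : G.Adj v u0 := by rwa [← SimpleGraph.mem_neighborFinset]
      have hmem : s(v, u0) ∈ G.edgeFinset.filter fun e => ∀ w ∈ e, ξ w = i := by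
        simp only [Finset.mem_filter, SimpleGraph.mem_edgeFinset,
          SimpleGraph.mem_edgeSet, Sym2.mem_iff, forall_eq_or_imp, forall_eq]
        exact ⟨hadj, hv, hu0i⟩
      have := hsub hmem
      simp only [Finset.mem_filter, Sym2.mem_iff, forall_eq_or_imp, forall_eq] at this
      rw [hψv] at this
      exact hji this.2.1
  -- conclude Phi ψ < Phi ξ, contradicting minimality
  have hlt : Phi G α ψ < Phi G α ξ := by
    unfold Phi
    have hαi : (0 : ℚ) < (α i : ℚ) := by
      exact_mod_cast lt_of_lt_of_le two_pos (hα i)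
    apply Finset.sum_lt_sum
    · intro k _
      rcases eq_or_ne k i with rfl | hk
      · exact (div_le_div_iff_of_pos_right hαi).mpr (by exact_mod_cast keylt.le)
      · rw [keyeq k hk]
    · refine ⟨i, Finset.mem_univ i, ?_⟩
      exact (div_lt_div_iff_of_pos_right hαi).mpr (by exact_mod_cast keylt)
  exact absurd (hmin ψ) (not_le.mpr hlt)
end

section
/- Let G be a finite simple graph with maximum degree at most D that contains no clique on D+1 vertices, let D = α_1 + ... + α_{c+1} where each α_i ≥ 2 is an integer, and let ξ ∈ Ω. Let v be a vertex belonging to some large clique of ξ, and let ξ' be the coloring obtained from ξ by recoloring v with an arbitrary color different from ξ(v). Then ξ' also minimizes Φ (i.e. Φ(ξ') = Φ(ξ)), and the number of large cliques of ξ' is at most the number of large cliques of ξ. -/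
open scoped Classical

/-- A *large clique* of the coloring `ξ`: a set of `α_i + 1` pairwise adjacent vertices all of
color `i`, for some color `i`. -/
def IsLargeClique {V : Type*} (G : SimpleGraph V) {k : ℕ} (α : Fin k → ℕ)
    (ξ : V → Fin k) (s : Finset V) : Prop :=
  ∃ i : Fin k, G.IsNClique (α i + 1) s ∧ ∀ v ∈ s, ξ v = i

/-- `φ(ξ)`: the number of large cliques of the coloring `ξ`. -/
noncomputable def numLargeCliques {V : Type*} (G : SimpleGraph V) {k : ℕ}
    (α : Fin k → ℕ) (ξ : V → Fin k) : ℕ :=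
  Set.ncard {s : Finset V | IsLargeClique G α ξ s}


noncomputable def colDeg {V : Type*} [Fintype V] [DecidableEq V] (G : SimpleGraph V)
    [DecidableRel G.Adj] {k : ℕ} (ξ : V → Fin k) (v : V) (i : Fin k) : ℕ :=
  ((G.neighborFinset v).filter fun u => ξ u = i).card

lemma sum_colDeg {V : Type*} [Fintype V] [DecidableEq V] (G : SimpleGraph V)
    [DecidableRel G.Adj] {k : ℕ} (ξ : V → Fin k) (v : V) :
    ∑ i, colDeg G ξ v i = G.degree v := by
  rw [← SimpleGraph.card_neighborFinset_eq_degree]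
  exact (Finset.card_eq_sum_card_fiberwise (f := ξ)
    (fun x _ => Finset.mem_univ _)).symm

lemma card_edges_at {V : Type*} [Fintype V] [DecidableEq V] (G : SimpleGraph V)
    [DecidableRel G.Adj] (v : V) (p : V → Prop) [DecidablePred p] (hv : p v) :
    (G.edgeFinset.filter fun e => v ∈ e ∧ ∀ w ∈ e, p w).card
      = ((G.neighborFinset v).filter p).card := by
  refine Finset.card_bij' (fun e he => Sym2.Mem.other' (Finset.mem_filter.1 he).2.1)
    (fun u _ => s(v, u)) ?_ ?_ ?_ ?_
  · intro e he
    obtain ⟨he1, hv1, hall⟩ := Finset.mem_filter.1 he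
    rw [Finset.mem_filter, SimpleGraph.mem_neighborFinset]
    refine ⟨?_, hall _ (Sym2.other_mem' _)⟩
    have h2 : s(v, Sym2.Mem.other' (Finset.mem_filter.1 he).2.1) = e := Sym2.other_spec' _
    have : e ∈ G.edgeSet := SimpleGraph.mem_edgeFinset.1 he1
    rw [← h2] at this
    exact this
  · intro u hu
    rw [Finset.mem_filter, SimpleGraph.mem_neighborFinset] at hu
    rw [Finset.mem_filter, SimpleGraph.mem_edgeFinset]
    refine ⟨hu.1, Sym2.mem_mk_left _ _, ?_⟩
    intro w hw
    rcases Sym2.mem_iff.1 hw with rfl | rfl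
    · exact hv
    · exact hu.2
  · intro e he
    exact Sym2.other_spec' (Finset.mem_filter.1 he).2.1
  · intro u hu
    exact Sym2.congr_right.1 (Sym2.other_spec' _)

lemma monoEdges_split {V : Type*} [Fintype V] [DecidableEq V] (G : SimpleGraph V)
    [DecidableRel G.Adj] {k : ℕ} (ξ : V → Fin k) (v : V) (i : Fin k) :
    monoEdges G ξ i = (G.edgeFinset.filter fun e => v ∉ e ∧ ∀ w ∈ e, ξ w = i).card
      + (if ξ v = i then colDeg G ξ v i else 0) := by
  unfold monoEdges
  rw [← Finset.card_filter_add_card_filter_not (s := G.edgeFinset.filter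
    fun e => ∀ w ∈ e, ξ w = i) (p := fun e => v ∈ e), Finset.filter_filter,
    Finset.filter_filter, add_comm]
  congr 1
  · exact congrArg Finset.card (Finset.filter_congr fun e _ => by tauto)
  · by_cases hvi : ξ v = i
    · rw [if_pos hvi]
      unfold colDeg
      rw [← card_edges_at G v (fun w => ξ w = i) hvi]
      exact congrArg Finset.card (Finset.filter_congr fun e _ => by tauto)
    · rw [if_neg hvi]
      convert Finset.card_empty
      rw [Finset.filter_eq_empty_iff]
      rintro e _ ⟨hall, hv⟩
      exact hvi (hall v hv)

lemma colDeg_update {V : Type*} [Fintype V] [DecidableEq V] (G : SimpleGraph V)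
    [DecidableRel G.Adj] {k : ℕ} (ξ : V → Fin k) (v : V) (j i : Fin k) :
    colDeg G (Function.update ξ v j) v i = colDeg G ξ v i := by
  unfold colDeg
  congr 1
  apply Finset.filter_congr
  intro u hu
  rw [SimpleGraph.mem_neighborFinset] at hu
  rw [Function.update_of_ne (G.ne_of_adj hu).symm]

lemma phi_key {V : Type*} [Fintype V] [DecidableEq V] (G : SimpleGraph V)
    [DecidableRel G.Adj] {k : ℕ} (α : Fin k → ℕ) (ξ : V → Fin k) (v : V) (j : Fin k)
    (hj : j ≠ ξ v) :
    Phi G α (Function.update ξ v j) + (colDeg G ξ v (ξ v) : ℚ) / (α (ξ v) : ℚ)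
      = Phi G α ξ + (colDeg G ξ v j : ℚ) / (α j : ℚ) := by
  have hB : ∀ i, (G.edgeFinset.filter fun e => v ∉ e ∧ ∀ w ∈ e,
      Function.update ξ v j w = i) = (G.edgeFinset.filter fun e => v ∉ e ∧ ∀ w ∈ e, ξ w = i) := by
    intro i
    apply Finset.filter_congr
    intro e _
    constructor
    · rintro ⟨hv, hall⟩
      exact ⟨hv, fun w hw => by
        have := hall w hw
        rwa [Function.update_of_ne (fun h : w = v => hv (h ▸ hw))] at this⟩
    · rintro ⟨hv, hall⟩
      exact ⟨hv, fun w hw => by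
        rw [Function.update_of_ne (fun h : w = v => hv (h ▸ hw))]
        exact hall w hw⟩
  have key : ∀ (ψ : V → Fin k), Phi G α ψ
      = (∑ i, ((G.edgeFinset.filter fun e => v ∉ e ∧ ∀ w ∈ e, ψ w = i).card : ℚ) / (α i : ℚ))
        + (colDeg G ψ v (ψ v) : ℚ) / (α (ψ v) : ℚ) := by
    intro ψ
    unfold Phi
    have : ∀ i, (monoEdges G ψ i : ℚ) / (α i : ℚ)
        = ((G.edgeFinset.filter fun e => v ∉ e ∧ ∀ w ∈ e, ψ w = i).card : ℚ) / (α i : ℚ)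
          + (if ψ v = i then (colDeg G ψ v i : ℚ) / (α i : ℚ) else 0) := by
      intro i
      rw [monoEdges_split G ψ v i]
      push_cast
      rw [add_div]
      congr 1
      split <;> simp
    rw [Finset.sum_congr rfl fun i _ => this i, Finset.sum_add_distrib]
    congr 1
    rw [Finset.sum_ite_eq]
    simp
  rw [key ξ, key (Function.update ξ v j)]
  rw [Function.update_self]
  simp only [hB, colDeg_update]
  ring

/-- **Proposition 3.5.** Let `ξ ∈ Ω` (i.e. `ξ` minimizes `Φ` and, among the
`Φ`-minimizing colorings, minimizes the number `φ` of large cliques). If `v` belongs to some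
large clique of `ξ` and `ξ'` is obtained from `ξ` by recoloring `v` with any color `j ≠ ξ v`,
then `Φ(ξ') = Φ(ξ)` and `φ(ξ') ≤ φ(ξ)`. -/
theorem recolor_large_clique_vertex {V : Type*} [Fintype V] [DecidableEq V]
    (G : SimpleGraph V) [DecidableRel G.Adj] (D c : ℕ)
    (α : Fin (c + 1) → ℕ) (hα : ∀ i, 2 ≤ α i) (hsum : ∑ i, α i = D)
    (hdeg : ∀ v : V, G.degree v ≤ D) (hfree : G.CliqueFree (D + 1))
    (ξ : V → Fin (c + 1))
    (hmin : ∀ ψ : V → Fin (c + 1), Phi G α ξ ≤ Phi G α ψ)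
    (hphimin : ∀ ψ : V → Fin (c + 1), (∀ χ : V → Fin (c + 1), Phi G α ψ ≤ Phi G α χ) →
      numLargeCliques G α ξ ≤ numLargeCliques G α ψ)
    (v : V) (s : Finset V) (hs : IsLargeClique G α ξ s) (hvs : v ∈ s)
    (j : Fin (c + 1)) (hj : j ≠ ξ v) :
    Phi G α (Function.update ξ v j) = Phi G α ξ ∧
    numLargeCliques G α (Function.update ξ v j) ≤ numLargeCliques G α ξ := by
  have hαQ : ∀ i : Fin (c + 1), (0:ℚ) < (α i : ℚ) := by
    intro i
    have := hα i
    exact_mod_cast Nat.lt_of_lt_of_le (by norm_num) this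
  obtain ⟨i0, hclique, hcol⟩ := hs
  have hi0 : ξ v = i0 := hcol v hvs
  subst hi0
  -- Step A : the color degree at the color of v is at least α (ξ v)
  have hdi : α (ξ v) ≤ colDeg G ξ v (ξ v) := by
    have hsub : s.erase v ⊆ (G.neighborFinset v).filter fun u => ξ u = ξ v := by
      intro u hu
      obtain ⟨hne, hus⟩ := Finset.mem_erase.1 hu
      rw [Finset.mem_filter, SimpleGraph.mem_neighborFinset]
      exact ⟨hclique.1 (Finset.mem_coe.2 hvs) (Finset.mem_coe.2 hus) (Ne.symm hne),
        hcol u hus⟩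
    have := Finset.card_le_card hsub
    rwa [Finset.card_erase_of_mem hvs, hclique.2, Nat.add_sub_cancel] at this
  -- Step B : every color degree is at least the corresponding α
  have hαled : ∀ m : Fin (c + 1), α m ≤ colDeg G ξ v m := by
    intro m
    by_cases hm : m = ξ v
    · subst hm; exact hdi
    · have h1 := hmin (Function.update ξ v m)
      have h2 := phi_key G α ξ v m hm
      have h3 : (colDeg G ξ v (ξ v) : ℚ) / (α (ξ v) : ℚ)
          ≤ (colDeg G ξ v m : ℚ) / (α m : ℚ) := by linarith
      have h4 : (1:ℚ) ≤ (colDeg G ξ v (ξ v) : ℚ) / (α (ξ v) : ℚ) := by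
        rw [le_div_iff₀ (hαQ (ξ v)), one_mul]
        exact_mod_cast hdi
      have h5 : (α m : ℚ) ≤ (colDeg G ξ v m : ℚ) := by
        have := le_trans h4 h3
        rw [le_div_iff₀ (hαQ m), one_mul] at this
        exact this
      exact_mod_cast h5
  -- Step C : all color degrees equal α
  have hall : ∀ m : Fin (c + 1), colDeg G ξ v m = α m := by
    have hsumle : ∑ m, colDeg G ξ v m ≤ ∑ m, α m := by
      rw [hsum, sum_colDeg]
      exact hdeg v
    have hge := Finset.sum_le_sum (fun m (_ : m ∈ Finset.univ) => hαled m)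
    have heq : ∑ m, α m = ∑ m, colDeg G ξ v m := le_antisymm hge hsumle
    intro m
    exact ((Finset.sum_eq_sum_iff_of_le (fun m _ => hαled m)).1 heq m (Finset.mem_univ m)).symm
  have hPhi : Phi G α (Function.update ξ v j) = Phi G α ξ := by
    have h2 := phi_key G α ξ v j hj
    rw [hall (ξ v), hall j, div_self (ne_of_gt (hαQ (ξ v))), div_self (ne_of_gt (hαQ j))] at h2
    linarith
  refine ⟨hPhi, ?_⟩
  -- Step D : count large cliques
  set ξ' := Function.update ξ v j with hξ'
  set Nj := (G.neighborFinset v).filter fun u => ξ u = j with hNj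
  have huniq : ∀ t : Finset V, IsLargeClique G α ξ' t → v ∈ t → t = insert v Nj := by
    rintro t ⟨i1, hc, hcolt⟩ hvt
    have hi1 : i1 = j := by
      have := hcolt v hvt
      rw [hξ', Function.update_self] at this
      exact this.symm
    rw [hi1] at hc hcolt
    have hsub : t.erase v ⊆ Nj := by
      intro u hu
      obtain ⟨hne, hut⟩ := Finset.mem_erase.1 hu
      rw [hNj, Finset.mem_filter, SimpleGraph.mem_neighborFinset]
      refine ⟨hc.1 (Finset.mem_coe.2 hvt) (Finset.mem_coe.2 hut) (Ne.symm hne), ?_⟩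
      have := hcolt u hut
      rwa [hξ', Function.update_of_ne hne] at this
    have hcard : Nj.card ≤ (t.erase v).card := by
      rw [Finset.card_erase_of_mem hvt, hc.2, Nat.add_sub_cancel]
      have : Nj.card = α j := hall j
      omega
    have herase : t.erase v = Nj := Finset.eq_of_subset_of_card_le hsub hcard
    rw [← herase, Finset.insert_erase hvt]
  have hmap : ∀ t : Finset V, IsLargeClique G α ξ' t →
      IsLargeClique G α ξ (if v ∈ t then s else t) := by
    rintro t ⟨i1, hc, hcolt⟩
    by_cases hvt : v ∈ t
    · rw [if_pos hvt]
      exact ⟨ξ v, hclique, hcol⟩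
    · rw [if_neg hvt]
      refine ⟨i1, hc, fun u hut => ?_⟩
      have := hcolt u hut
      rwa [hξ', Function.update_of_ne (fun h : u = v => hvt (h ▸ hut))] at this
  have hinj : Set.InjOn (fun t : Finset V => if v ∈ t then s else t)
      {t : Finset V | IsLargeClique G α ξ' t} := by
    intro t1 ht1 t2 ht2 h
    simp only at h
    by_cases h1 : v ∈ t1 <;> by_cases h2 : v ∈ t2
    · rw [huniq t1 ht1 h1, huniq t2 ht2 h2]
    · rw [if_pos h1, if_neg h2] at h
      exact absurd (h ▸ hvs) h2
    · rw [if_neg h1, if_pos h2] at h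
      exact absurd (h.symm ▸ hvs) h1
    · rwa [if_neg h1, if_neg h2] at h
  unfold numLargeCliques
  calc Set.ncard {t : Finset V | IsLargeClique G α ξ' t}
      = Set.ncard ((fun t : Finset V => if v ∈ t then s else t) ''
          {t : Finset V | IsLargeClique G α ξ' t}) := (Set.ncard_image_of_injOn hinj).symm
    _ ≤ Set.ncard {t : Finset V | IsLargeClique G α ξ t} := by
        apply Set.ncard_le_ncard _ (Set.toFinite _)
        rintro x ⟨t, ht, rfl⟩
        exact hmap t ht
end
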